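/- arXiv:2205.13179 — 7 statements merged into one kernel-verified Lean document; each statement's English description precedes it below -/
import Mathlib

section
/- Let A_n be an n×n complex matrix for each n ∈ ℕ. Then {A_n} converges to the zero sequence in Type 2 strong cluster sense if and only if for each ε > 0 there exist two positive integers N₁ and N₂ such that for all n > N₂, except at most N₁ singular values, all other singular values of A_n belong to the interval [0, ε). -/
/-!
Let `b` be an orthonormal eigenbasis of `Aᴴ * A`, with eigenvalues `σᵢ²`, so that
`‖A x‖² = ∑ σᵢ² ‖⟪bᵢ, x⟫‖²`. If `A = R + E` with `‖E‖ < ε`, then every nonzero `y` in the span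
of the `bᵢ` with `σᵢ ≥ ε` satisfies `‖A y‖ ≥ ε ‖y‖ > ‖E y‖`, so `R y ≠ 0`: hence `rank R` is at
least the number of such `σᵢ`. Conversely, with `P` the orthogonal projection onto that span,
`A = A P + A (1 - P)`, where `rank (A P)` is at most that number and
`‖A (1 - P)‖ ≤ max {σᵢ | σᵢ < ε} < ε`.
-/

open MeasureTheory Matrix AddCircle
open scoped Real ComplexOrder

noncomputable section

instance : Fact (0 < 2 * Real.pi) := ⟨by positivity⟩

/-- The circle of circumference `2π`. -/
abbrev 𝕋 : Type := AddCircle (2 * Real.pi)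

/-- The `n × n` Toeplitz matrix of `f`, with `(i,j)` entry the Fourier coefficient
`f̂(i - j)`. -/
def toeplitz (n : ℕ) (f : 𝕋 → ℂ) : Matrix (Fin n) (Fin n) ℂ :=
  Matrix.of fun i j : Fin n => fourierCoeff f (((i : ℕ) : ℤ) - ((j : ℕ) : ℤ))

/-- The operator (spectral) norm of a complex `n × n` matrix. -/
def opNorm {n : ℕ} (A : Matrix (Fin n) (Fin n) ℂ) : ℝ :=
  ‖Matrix.toEuclideanCLM (𝕜 := ℂ) A‖

/-- A sequence of matrices `{Aₙ}` converges to the zero sequence in Type 2 strong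
cluster sense: for every `ε > 0` there are `N₁, N₂` such that for `n > N₂` one can
split `Aₙ = Rₙ + Eₙ` with `rank Rₙ ≤ N₁` and `‖Eₙ‖ < ε`. -/
def Type2StrongCluster (A : ∀ n : ℕ, Matrix (Fin n) (Fin n) ℂ) : Prop :=
  ∀ ε > (0 : ℝ), ∃ N₁ N₂ : ℕ, ∀ n : ℕ, N₂ < n →
    ∃ R E : Matrix (Fin n) (Fin n) ℂ, A n = R + E ∧ R.rank ≤ N₁ ∧ opNorm E < ε

/-- A sequence of Hermitian matrices `{Aₙ}` converges to the zero sequence in Type 1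
strong cluster sense: for every `ε > 0` there are `N₁, N₂` such that for `n > N₂`, at
most `N₁` of the eigenvalues of `Aₙ` lie outside `(-ε, ε)`. -/
def Type1StrongCluster (A : ∀ n : ℕ, Matrix (Fin n) (Fin n) ℂ)
    (hA : ∀ n, (A n).IsHermitian) : Prop :=
  ∀ ε > (0 : ℝ), ∃ N₁ N₂ : ℕ, ∀ n : ℕ, N₂ < n →
    {i : Fin n | ε ≤ |(hA n).eigenvalues i|}.ncard ≤ N₁

/-- `f` has vanishing mean oscillation: with `F` the `2π`-periodic lift of `f`, the
`L²` mean oscillation of `F` over intervals `I` tends to `0` as `|I| → 0`. -/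
def VMO (f : 𝕋 → ℂ) : Prop :=
  ∀ ε > (0 : ℝ), ∃ δ > (0 : ℝ), ∀ a b : ℝ, a < b → b - a < δ →
    Real.sqrt ((b - a)⁻¹ *
      ∫ t in a..b, ‖f (t : 𝕋) - (b - a)⁻¹ • ∫ s in a..b, f (s : 𝕋)‖ ^ 2) < ε


/-- The singular values of a complex `n × n` matrix `A`: the nonnegative square roots
of the eigenvalues of the Hermitian positive semidefinite matrix `Aᴴ * A`. -/
def singularValues {n : ℕ} (A : Matrix (Fin n) (Fin n) ℂ) (i : Fin n) : ℝ :=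
  Real.sqrt ((Matrix.isHermitian_conjTranspose_mul_self A).eigenvalues i)

open Module Submodule
open scoped InnerProductSpace

lemma LinearMap.exists_mem_ne_zero_map_eq_zero_of_finrank_range_lt {K V V₂ : Type*} [DivisionRing K]
    [AddCommGroup V] [Module K V] [AddCommGroup V₂] [Module K V₂] [FiniteDimensional K V₂]
    {f : V →ₗ[K] V₂} {W : Submodule K V} [FiniteDimensional K W]
    (h : finrank K (LinearMap.range f) < finrank K W) :
    ∃ y ∈ W, y ≠ 0 ∧ f y = 0 := by
  let g : W →ₗ[K] LinearMap.range f :=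
    (f.comp W.subtype).codRestrict _ fun w => LinearMap.mem_range_self f w
  obtain ⟨w, hw', hw⟩ := (LinearMap.ker g).ne_bot_iff.mp (LinearMap.ker_ne_bot_of_finrank_lt h)
  exact ⟨w, w.2, by simpa using hw, congrArg Subtype.val (LinearMap.mem_ker.mp hw')⟩

lemma OrthonormalBasis.inner_eq_zero_of_mem_span_image {ι 𝕜 E : Type*} [Fintype ι] [RCLike 𝕜]
    [NormedAddCommGroup E] [InnerProductSpace 𝕜 E] (b : OrthonormalBasis ι 𝕜 E) {s : Set ι}
    {i : ι} (hi : i ∉ s) {y : E} (hy : y ∈ span 𝕜 (b '' s)) : ⟪b i, y⟫_𝕜 = 0 := by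
  have hspan : span 𝕜 (b '' s) ≤ (𝕜 ∙ b i)ᗮ := by
    rw [span_le]
    rintro _ ⟨j, hj, rfl⟩
    exact mem_orthogonal_singleton_iff_inner_right.mpr
      (b.orthonormal.inner_eq_zero fun h => hi (h ▸ hj))
  exact mem_orthogonal_singleton_iff_inner_right.mp (hspan hy)

lemma exists_nonneg_lt_forall_le_of_lt {ι : Type*} [Fintype ι] (f : ι → ℝ) {ε : ℝ} (hε : 0 < ε) :
    ∃ δ, 0 ≤ δ ∧ δ < ε ∧ ∀ i, f i < ε → f i ≤ δ := by
  classical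
  let t := insert 0 ((Finset.univ.filter fun i => f i < ε).image f)
  refine ⟨t.max' (Finset.insert_nonempty _ _), t.le_max' _ (Finset.mem_insert_self _ _), ?_,
    fun i hi => t.le_max' _ (Finset.mem_insert_of_mem (Finset.mem_image_of_mem f (by simpa)))⟩
  rw [Finset.max'_lt_iff]
  simp [t, hε]

lemma OrthonormalBasis.finrank_span_image {ι 𝕜 E : Type*} [Fintype ι] [RCLike 𝕜]
    [NormedAddCommGroup E] [InnerProductSpace 𝕜 E] (b : OrthonormalBasis ι 𝕜 E) (s : Finset ι) :
    finrank 𝕜 (span 𝕜 (b '' s)) = s.card := by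
  have himage : b '' s = Set.range (b ∘ ((↑) : s → ι)) := by
    rw [Set.range_comp, Subtype.range_coe]
  rw [himage, finrank_span_eq_card
    (b.orthonormal.linearIndependent.comp _ Subtype.val_injective), Fintype.card_coe]

namespace Matrix

variable {ι : Type*} [Fintype ι] [DecidableEq ι]

lemma rank_eq_finrank_range_toEuclideanCLM (M : Matrix ι ι ℂ) :
    M.rank = finrank ℂ (LinearMap.range (toEuclideanCLM (𝕜 := ℂ) M).toLinearMap) := by
  rw [rank_eq_finrank_range_toLin M (PiLp.basisFun 2 ℂ ι) (PiLp.basisFun 2 ℂ ι),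
    ← toLpLin_eq_toLin]
  rfl

lemma IsHermitian.toEuclideanCLM_eigenvectorBasis {B : Matrix ι ι ℂ} (hB : B.IsHermitian) (i : ι) :
    toEuclideanCLM (𝕜 := ℂ) B (hB.eigenvectorBasis i) =
      (hB.eigenvalues i : ℂ) • hB.eigenvectorBasis i := by
  apply WithLp.ofLp_injective 2
  rw [ofLp_toEuclideanCLM, hB.mulVec_eigenvectorBasis, WithLp.ofLp_smul,
    RCLike.real_smul_eq_coe_smul (K := ℂ)]
  rfl

lemma IsHermitian.re_inner_toEuclideanCLM_apply_self {B : Matrix ι ι ℂ} (hB : B.IsHermitian)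
    (x : EuclideanSpace ℂ ι) :
    RCLike.re ⟪toEuclideanCLM (𝕜 := ℂ) B x, x⟫_ℂ =
      ∑ i, hB.eigenvalues i * ‖⟪hB.eigenvectorBasis i, x⟫_ℂ‖ ^ 2 := by
  set b := hB.eigenvectorBasis
  have hsymm := isSymmetric_toEuclideanLin_iff.mpr hB
  rw [← b.sum_inner_mul_inner, map_sum]
  refine Finset.sum_congr rfl fun i _ => ?_
  rw [show ⟪toEuclideanCLM (𝕜 := ℂ) B x, b i⟫_ℂ = ⟪x, toEuclideanCLM (𝕜 := ℂ) B (b i)⟫_ℂ from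
      hsymm x (b i), hB.toEuclideanCLM_eigenvectorBasis, inner_smul_right, mul_assoc,
    ← inner_conj_symm, RCLike.conj_mul]
  rw [← RCLike.ofReal_pow]
  exact Complex.re_ofReal_mul _ _

lemma norm_toEuclideanCLM_apply_sq (A : Matrix ι ι ℂ) (x : EuclideanSpace ℂ ι) :
    ‖toEuclideanCLM (𝕜 := ℂ) A x‖ ^ 2 =
      ∑ i, (isHermitian_conjTranspose_mul_self A).eigenvalues i *
        ‖⟪(isHermitian_conjTranspose_mul_self A).eigenvectorBasis i, x⟫_ℂ‖ ^ 2 := by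
  rw [← (isHermitian_conjTranspose_mul_self A).re_inner_toEuclideanCLM_apply_self,
    ← inner_self_eq_norm_sq (𝕜 := ℂ), map_mul, ← star_eq_conjTranspose, map_star, mul_apply_eq_comp,
    ContinuousLinearMap.star_eq_adjoint, ContinuousLinearMap.adjoint_inner_left]

lemma mul_norm_sq_le_norm_toEuclideanCLM_apply_sq (A : Matrix ι ι ℂ) {c : ℝ}
    {x : EuclideanSpace ℂ ι}
    (hc : ∀ i, ⟪(isHermitian_conjTranspose_mul_self A).eigenvectorBasis i, x⟫_ℂ ≠ 0 →
      c ≤ (isHermitian_conjTranspose_mul_self A).eigenvalues i) :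
    c * ‖x‖ ^ 2 ≤ ‖toEuclideanCLM (𝕜 := ℂ) A x‖ ^ 2 := by
  rw [norm_toEuclideanCLM_apply_sq, ← OrthonormalBasis.sum_sq_norm_inner_right
    (isHermitian_conjTranspose_mul_self A).eigenvectorBasis, Finset.mul_sum]
  refine Finset.sum_le_sum fun i _ => ?_
  by_cases hi : ⟪(isHermitian_conjTranspose_mul_self A).eigenvectorBasis i, x⟫_ℂ = 0
  · simp [hi]
  · exact mul_le_mul_of_nonneg_right (hc i hi) (by positivity)

lemma norm_toEuclideanCLM_apply_sq_le (A : Matrix ι ι ℂ) {c : ℝ}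
    {x : EuclideanSpace ℂ ι}
    (hc : ∀ i, ⟪(isHermitian_conjTranspose_mul_self A).eigenvectorBasis i, x⟫_ℂ ≠ 0 →
      (isHermitian_conjTranspose_mul_self A).eigenvalues i ≤ c) :
    ‖toEuclideanCLM (𝕜 := ℂ) A x‖ ^ 2 ≤ c * ‖x‖ ^ 2 := by
  rw [norm_toEuclideanCLM_apply_sq, ← OrthonormalBasis.sum_sq_norm_inner_right
    (isHermitian_conjTranspose_mul_self A).eigenvectorBasis, Finset.mul_sum]
  refine Finset.sum_le_sum fun i _ => ?_
  by_cases hi : ⟪(isHermitian_conjTranspose_mul_self A).eigenvectorBasis i, x⟫_ℂ = 0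
  · simp [hi]
  · exact mul_le_mul_of_nonneg_right (hc i hi) (by positivity)

lemma card_le_rank_of_eq_add {A R E : Matrix ι ι ℂ} (hA : A = R + E) {ε : ℝ}
    (hE : ‖toEuclideanCLM (𝕜 := ℂ) E‖ < ε) {s : Finset ι}
    (hs : ∀ i ∈ s, ε ^ 2 ≤ (isHermitian_conjTranspose_mul_self A).eigenvalues i) :
    s.card ≤ R.rank := by
  set b := (isHermitian_conjTranspose_mul_self A).eigenvectorBasis
  by_contra! hlt
  rw [rank_eq_finrank_range_toEuclideanCLM, ← b.finrank_span_image s] at hlt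
  obtain ⟨y, hyW, hy0, hRy⟩ := LinearMap.exists_mem_ne_zero_map_eq_zero_of_finrank_range_lt hlt
  have hAy : toEuclideanCLM (𝕜 := ℂ) A y = toEuclideanCLM (𝕜 := ℂ) E y := by
    rw [hA, map_add, _root_.add_apply, show toEuclideanCLM (𝕜 := ℂ) R y = 0 from hRy, zero_add]
  have hlow : ε ^ 2 * ‖y‖ ^ 2 ≤ ‖toEuclideanCLM (𝕜 := ℂ) A y‖ ^ 2 :=
    mul_norm_sq_le_norm_toEuclideanCLM_apply_sq A fun i hi =>
      hs i (by_contra fun his => hi (b.inner_eq_zero_of_mem_span_image his hyW))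
  have hup : ‖toEuclideanCLM (𝕜 := ℂ) A y‖ < ε * ‖y‖ := by
    rw [hAy]
    exact ((toEuclideanCLM (𝕜 := ℂ) E).le_opNorm y).trans_lt
      (mul_lt_mul_of_pos_right hE (norm_pos_iff.mpr hy0))
  have := pow_lt_pow_left₀ hup (norm_nonneg _) two_ne_zero
  rw [mul_pow] at this
  linarith

lemma exists_eq_add_rank_le_card (A : Matrix ι ι ℂ) {ε : ℝ} (hε : 0 < ε) {s : Finset ι}
    (hs : ∀ i ∉ s, (isHermitian_conjTranspose_mul_self A).eigenvalues i < ε ^ 2) :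
    ∃ R E : Matrix ι ι ℂ, A = R + E ∧ R.rank ≤ s.card ∧ ‖toEuclideanCLM (𝕜 := ℂ) E‖ < ε := by
  set b := (isHermitian_conjTranspose_mul_self A).eigenvectorBasis
  set W := span ℂ (b '' s)
  set L := toEuclideanCLM (𝕜 := ℂ) (n := ι)
  obtain ⟨δ, hδ0, hδε, hδ⟩ :=
    exists_nonneg_lt_forall_le_of_lt (isHermitian_conjTranspose_mul_self A).eigenvalues
      (pow_pos hε 2)
  refine ⟨L.symm (L A ∘L W.starProjection), L.symm (L A ∘L Wᗮ.starProjection), ?_, ?_, ?_⟩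
  · rw [← map_add, ← ContinuousLinearMap.comp_add,
      ← id_eq_sum_starProjection_self_orthogonalComplement, ContinuousLinearMap.comp_id,
      L.symm_apply_apply]
  · rw [rank_eq_finrank_range_toEuclideanCLM, L.apply_symm_apply, ← b.finrank_span_image s]
    calc _ = finrank ℂ (Submodule.map (L A).toLinearMap
          (LinearMap.range W.starProjection.toLinearMap)) := by
          rw [ContinuousLinearMap.toLinearMap_comp, LinearMap.range_comp]
      _ ≤ _ := finrank_map_le _ _
      _ = _ := by rw [range_starProjection]
  · rw [L.apply_symm_apply]
    refine lt_of_le_of_lt (ContinuousLinearMap.opNorm_le_bound _ (Real.sqrt_nonneg δ) fun x => ?_)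
      ((Real.sqrt_lt' hε).mpr hδε)
    set z := Wᗮ.starProjection x
    have hz : ‖L A z‖ ^ 2 ≤ δ * ‖z‖ ^ 2 :=
      norm_toEuclideanCLM_apply_sq_le A fun i hi => hδ i (hs i fun his => hi
        (inner_right_of_mem_orthogonal (subset_span (Set.mem_image_of_mem b his))
          (starProjection_apply_mem _ x)))
    calc ‖L A z‖ ≤ √δ * ‖z‖ := by
          rw [← Real.sqrt_sq (norm_nonneg (L A z)), ← Real.sqrt_sq (norm_nonneg z),
            ← Real.sqrt_mul hδ0]
          exact Real.sqrt_le_sqrt hz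
      _ ≤ √δ * ‖x‖ :=
          mul_le_mul_of_nonneg_left (norm_starProjection_apply_le _ x) (Real.sqrt_nonneg δ)

end Matrix

section SingularValues

variable {n : ℕ}

lemma setOf_singularValues_notMem_Ico (A : Matrix (Fin n) (Fin n) ℂ) (ε : ℝ) :
    {i | singularValues A i ∉ Set.Ico 0 ε} = {i | ε ≤ singularValues A i} := by
  ext i
  simp [singularValues, Real.sqrt_nonneg]

lemma ncard_le_rank_of_eq_add_of_opNorm_lt {A R E : Matrix (Fin n) (Fin n) ℂ} (hA : A = R + E)
    {ε : ℝ} (hE : opNorm E < ε) : {i | ε ≤ singularValues A i}.ncard ≤ R.rank := by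
  have hε : 0 ≤ ε := (norm_nonneg _).trans hE.le
  rw [Set.ncard_eq_toFinset_card', Set.toFinset_ofPred]
  exact card_le_rank_of_eq_add hA hE fun i hi =>
    (Real.le_sqrt hε (eigenvalues_conjTranspose_mul_self_nonneg A i)).mp (Finset.mem_filter.mp hi).2

lemma exists_eq_add_rank_le_ncard_opNorm_lt (A : Matrix (Fin n) (Fin n) ℂ) {ε : ℝ} (hε : 0 < ε) :
    ∃ R E : Matrix (Fin n) (Fin n) ℂ,
      A = R + E ∧ R.rank ≤ {i | ε ≤ singularValues A i}.ncard ∧ opNorm E < ε := by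
  rw [Set.ncard_eq_toFinset_card', Set.toFinset_ofPred]
  exact exists_eq_add_rank_le_card A hε fun i hi =>
    (Real.sqrt_lt' hε).mp (not_le.mp fun h => hi (Finset.mem_filter.mpr ⟨Finset.mem_univ i, h⟩))

end SingularValues

/-- Lemma 1.5 of the paper: `{Aₙ}` converges to the zero sequence in
Type 2 strong cluster sense iff for each `ε > 0` there are two positive integers
`N₁, N₂` such that for all `n > N₂`, except at most `N₁` singular values, all other
singular values of `Aₙ` lie in `[0, ε)`. -/
theorem type2StrongCluster_iff_singularValues_cluster
    (A : ∀ n : ℕ, Matrix (Fin n) (Fin n) ℂ) :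
    Type2StrongCluster A ↔
      ∀ ε > (0 : ℝ), ∃ N₁ N₂ : ℕ, 0 < N₁ ∧ 0 < N₂ ∧ ∀ n : ℕ, N₂ < n →
        {i : Fin n | singularValues (A n) i ∉ Set.Ico (0 : ℝ) ε}.ncard ≤ N₁ := by
  simp only [setOf_singularValues_notMem_Ico]
  constructor
  · intro h ε hε
    obtain ⟨N₁, N₂, hN⟩ := h ε hε
    refine ⟨N₁ + 1, N₂ + 1, N₁.succ_pos, N₂.succ_pos, fun n hn => ?_⟩
    obtain ⟨R, E, hA, hR, hE⟩ := hN n (by omega)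
    exact (ncard_le_rank_of_eq_add_of_opNorm_lt hA hE).trans (hR.trans N₁.le_succ)
  · intro h ε hε
    obtain ⟨N₁, N₂, -, -, hN⟩ := h ε hε
    refine ⟨N₁, N₂, fun n hn => ?_⟩
    obtain ⟨R, E, hA, hR, hE⟩ := exists_eq_add_rank_le_ncard_opNorm_lt (A n) hε
    exact ⟨R, E, hA, hR.trans (hN n hn), hE⟩
end
end

section
/- Let f and g be square-integrable functions on the circle 𝕋 = AddCircle (2π), so that fg is integrable. Then for every n ≥ 1 and all 0 ≤ j, k < n, one has the identity (fg)^(j−k) − Σ_{l=0}^{n−1} f̂(j−l)·ĝ(l−k) = Σ_{m=1}^{∞} f̂(j+m)·ĝ(−m−k) + Σ_{m=0}^{∞} f̂(j−n−m)·ĝ(n+m−k), where both infinite series converge absolutely. (This is the entrywise form of Widom's identity T_n(fg) − T_n(f)T_n(g) = P_n H_{f̄}* H_g P_n + Q_n H_{\overline{f̃}}* H_{g̃} Q_n.) -/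
open MeasureTheory Matrix AddCircle
open scoped Real ComplexOrder

noncomputable section

/-!
With `a l = f̂(j - l) * ĝ(l - k)`, Parseval's identity for the `L²` functions `e_j · conj f`
and `e_k · g` gives `(fg)^(j - k) = ∑_{l ∈ ℤ} a l`, and Cauchy–Schwarz makes this series absolutely
convergent. Splitting `ℤ` into `{0, …, n - 1}`, `{n, n + 1, …}` and the negative integers, the
finite block is the `(j, k)` entry of `Tₙ(f) Tₙ(g)` and the other two blocks are the two series.
-/

open scoped ComplexConjugate

theorem summable_norm_mul_of_summable_sq {ι R : Type*} [NormedRing R] {u v : ι → R}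
    (hu : Summable fun i => ‖u i‖ ^ 2) (hv : Summable fun i => ‖v i‖ ^ 2) :
    Summable fun i => ‖u i * v i‖ := by
  refine .of_nonneg_of_le (fun _ => norm_nonneg _) (fun i => norm_mul_le _ _) ?_
  refine Real.summable_mul_of_Lp_Lq_of_nonneg Real.HolderConjugate.two_two
    (fun _ => norm_nonneg _) (fun _ => norm_nonneg _) ?_ ?_ <;>
  simpa only [Real.rpow_two]

theorem Summable.tsum_int_eq_sum_range_add_tsum_add {E : Type*} [NormedAddCommGroup E]
    [CompleteSpace E] {a : ℤ → E} (ha : Summable a) (n : ℕ) :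
    ∑' l, a l = ∑ l ∈ Finset.range n, a l + ∑' m : ℕ, a (n + m) + ∑' m : ℕ, a (-(m + 1)) := by
  have hnat : Summable fun m : ℕ => a m := ha.comp_injective Nat.cast_injective
  rw [tsum_of_nat_of_neg_add_one hnat (ha.comp_injective fun x y h => by simpa using h),
    ← hnat.sum_add_tsum_nat_add n]
  simp only [Nat.cast_add, add_comm]

namespace AddCircle

variable {T : ℝ} [Fact (0 < T)]

theorem hasSum_conj_fourierCoeff_mul_fourierCoeff
    (f g : Lp ℂ 2 (haarAddCircle : Measure (AddCircle T))) :
    HasSum (fun i => conj (fourierCoeff f i) * fourierCoeff g i)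
      (∫ t, conj (f t) * g t ∂haarAddCircle) := by
  simp_rw [mul_comm (conj _)]
  refine (fourierBasis.hasSum_inner_mul_inner f g).congr_fun fun i => ?_
  simp only [← fourierBasis_repr, HilbertBasis.repr_apply_apply, inner_conj_symm, mul_comm]

theorem fourierCoeff_fourier_mul (f : AddCircle T → ℂ) (m i : ℤ) :
    fourierCoeff (fun x => fourier m x * f x) i = fourierCoeff f (i - m) := by
  simp only [fourierCoeff, smul_eq_mul, ← mul_assoc, ← fourier_add, neg_sub', sub_neg_eq_add]

theorem fourierCoeff_conj (f : AddCircle T → ℂ) (i : ℤ) :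
    fourierCoeff (fun x => conj (f x)) i = conj (fourierCoeff f (-i)) := by
  simp only [fourierCoeff, smul_eq_mul, ← integral_conj, map_mul, neg_neg, fourier_neg]

theorem _root_.MeasureTheory.MemLp.fourier_mul {p : ENNReal} {f : AddCircle T → ℂ}
    (hf : MemLp f p haarAddCircle) (m : ℤ) :
    MemLp (fun x => fourier m x * f x) p haarAddCircle :=
  hf.of_le ((fourier m).continuous.aestronglyMeasurable.mul hf.1) <|
    .of_forall fun x => by simp [Circle.norm_coe]

theorem summable_sq_norm_fourierCoeff {f : AddCircle T → ℂ} (hf : MemLp f 2 haarAddCircle) :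
    Summable fun i => ‖fourierCoeff f i‖ ^ 2 := by
  simpa only [fourierCoeff_congr_ae hf.coeFn_toLp] using
    (hasSum_sq_fourierCoeff (hf.toLp f)).summable

theorem hasSum_fourierCoeff_mul {f g : AddCircle T → ℂ} (hf : MemLp f 2 haarAddCircle)
    (hg : MemLp g 2 haarAddCircle) (a b : ℤ) :
    HasSum (fun l => fourierCoeff f (a - l) * fourierCoeff g (l - b))
      (fourierCoeff (fun x => f x * g x) (a - b)) := by
  have hF : MemLp (fun x => fourier a x * conj (f x)) 2 haarAddCircle := hf.star.fourier_mul a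
  have hG := hg.fourier_mul b
  convert hasSum_conj_fourierCoeff_mul_fourierCoeff (hF.toLp _) (hG.toLp _) using 1
  · ext l
    rw [fourierCoeff_congr_ae hF.coeFn_toLp, fourierCoeff_congr_ae hG.coeFn_toLp,
      fourierCoeff_fourier_mul, fourierCoeff_fourier_mul, fourierCoeff_conj, neg_sub,
      RCLike.conj_conj]
  · refine integral_congr_ae ?_
    filter_upwards [hF.coeFn_toLp, hG.coeFn_toLp] with x hFx hGx
    rw [hFx, hGx, neg_sub', sub_neg_eq_add, fourier_add, fourier_neg, smul_eq_mul, map_mul,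
      RCLike.conj_conj]
    ring

end AddCircle

theorem widom_identity_entrywise_general (f g : 𝕋 → ℂ)
    (hf : MemLp f 2 haarAddCircle) (hg : MemLp g 2 haarAddCircle)
    (n : ℕ) (j k : Fin n) :
    Summable (fun m : ℕ =>
      ‖fourierCoeff f (((j : ℕ) : ℤ) + (m : ℤ) + 1) *
        fourierCoeff g (-((m : ℤ) + 1) - ((k : ℕ) : ℤ))‖) ∧
    Summable (fun m : ℕ =>
      ‖fourierCoeff f (((j : ℕ) : ℤ) - (n : ℤ) - (m : ℤ)) *
        fourierCoeff g ((n : ℤ) + (m : ℤ) - ((k : ℕ) : ℤ))‖) ∧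
    fourierCoeff (fun x => f x * g x) (((j : ℕ) : ℤ) - ((k : ℕ) : ℤ))
        - ∑ l : Fin n, fourierCoeff f (((j : ℕ) : ℤ) - ((l : ℕ) : ℤ)) *
            fourierCoeff g (((l : ℕ) : ℤ) - ((k : ℕ) : ℤ))
      = (∑' m : ℕ, fourierCoeff f (((j : ℕ) : ℤ) + (m : ℤ) + 1) *
            fourierCoeff g (-((m : ℤ) + 1) - ((k : ℕ) : ℤ)))
        + ∑' m : ℕ, fourierCoeff f (((j : ℕ) : ℤ) - (n : ℤ) - (m : ℤ)) *
            fourierCoeff g ((n : ℤ) + (m : ℤ) - ((k : ℕ) : ℤ)) := by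
  set a : ℤ → ℂ := fun l => fourierCoeff f (j - l) * fourierCoeff g (l - k) with ha
  have habs : Summable fun l => ‖a l‖ :=
    summable_norm_mul_of_summable_sq
      ((summable_sq_norm_fourierCoeff hf).comp_injective (sub_right_injective (b := (j : ℤ))))
      ((summable_sq_norm_fourierCoeff hg).comp_injective (sub_left_injective (b := (k : ℤ))))
  have hneg : ∀ m : ℕ, a (-(m + 1)) =
      fourierCoeff f (j + m + 1) * fourierCoeff g (-(m + 1) - k) := fun m => by
    simp only [ha, sub_neg_eq_add, ← add_assoc]
  have htail : ∀ m : ℕ, a (n + m) =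
      fourierCoeff f (j - n - m) * fourierCoeff g (n + m - k) := fun m => by
    simp only [ha, sub_sub]
  refine ⟨?_, ?_, ?_⟩
  · exact (habs.comp_injective (i := fun m : ℕ => -((m : ℤ) + 1)) fun _ _ h => by simpa using h)
      |>.congr fun m => congrArg norm (hneg m)
  · exact (habs.comp_injective (i := fun m : ℕ => (n : ℤ) + m) fun _ _ h => by simpa using h)
      |>.congr fun m => congrArg norm (htail m)
  · rw [← (AddCircle.hasSum_fourierCoeff_mul hf hg j k).tsum_eq,
      habs.of_norm.tsum_int_eq_sum_range_add_tsum_add n, ← Fin.sum_univ_eq_sum_range (a ·)]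
    simp only [hneg, htail]
    ring

/-- entrywise form of Widom's identity, Lemma 2.1 of the paper: for
`f, g ∈ L²(𝕋)`, `n ≥ 1` and `0 ≤ j, k < n`, the `(j,k)` entry of
`Tₙ(fg) − Tₙ(f)·Tₙ(g)` equals
`∑_{m≥1} f̂(j+m)·ĝ(−m−k) + ∑_{m≥0} f̂(j−n−m)·ĝ(n+m−k)`,
both series converging absolutely. -/
theorem widom_identity_entrywise (f g : 𝕋 → ℂ)
    (hf : MemLp f 2 haarAddCircle) (hg : MemLp g 2 haarAddCircle)
    (n : ℕ) (hn : 1 ≤ n) (j k : Fin n) :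
    Summable (fun m : ℕ =>
      ‖fourierCoeff f (((j : ℕ) : ℤ) + (m : ℤ) + 1) *
        fourierCoeff g (-((m : ℤ) + 1) - ((k : ℕ) : ℤ))‖) ∧
    Summable (fun m : ℕ =>
      ‖fourierCoeff f (((j : ℕ) : ℤ) - (n : ℤ) - (m : ℤ)) *
        fourierCoeff g ((n : ℤ) + (m : ℤ) - ((k : ℕ) : ℤ))‖) ∧
    fourierCoeff (fun x => f x * g x) (((j : ℕ) : ℤ) - ((k : ℕ) : ℤ))
        - ∑ l : Fin n, fourierCoeff f (((j : ℕ) : ℤ) - ((l : ℕ) : ℤ)) *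
            fourierCoeff g (((l : ℕ) : ℤ) - ((k : ℕ) : ℤ))
      = (∑' m : ℕ, fourierCoeff f (((j : ℕ) : ℤ) + (m : ℤ) + 1) *
            fourierCoeff g (-((m : ℤ) + 1) - ((k : ℕ) : ℤ)))
        + ∑' m : ℕ, fourierCoeff f (((j : ℕ) : ℤ) - (n : ℤ) - (m : ℤ)) *
            fourierCoeff g ((n : ℤ) + (m : ℤ) - ((k : ℕ) : ℤ)) :=
  widom_identity_entrywise_general f g hf hg n j k
end
end

section
/- Let H be a complex Hilbert space with a Hilbert basis e : ℕ → H, let K : H →L[ℂ] H be a bounded linear operator, and for each n let A_n ∈ Matrix (Fin n) (Fin n) ℂ be the finite section of K, with (i,j) entry ⟨K e_j, e_i⟩. Then K is a compact operator if and only if {A_n} converges to the zero sequence in Type 2 strong cluster sense. -/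
open MeasureTheory Matrix AddCircle
open scoped Real ComplexOrder

noncomputable section

/-!
If `K` is compact, then `(1 - Pₘ) K → 0` in norm, because `1 - Pₘ → 0` uniformly on the compact
closure of the image of the unit ball; the finite sections of `Pₘ K` have rank at most `m`, and
those of `(1 - Pₘ) K` have norm at most `‖(1 - Pₘ) K‖`.

Conversely, split `Aₙ = Rₙ + Eₙ` with `rank Rₙ ≤ N` and `‖Eₙ‖ < ε`. Every `(N + 1)`-dimensional
subspace `V` contains some `x ≠ 0` whose first `n` coordinates lie in `ker Rₙ`; writing
`K = (1 - Pₙ) K + Pₙ K (1 - Pₙ) + Pₙ K Pₙ` and taking `n` so large that `1 - Pₙ` is small on `V`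
and on `K V` gives `‖K x‖ ≤ (‖K‖ + 2) ε ‖x‖`. An operator with this property for every `ε` is a
norm limit of finite-rank operators: for `Q = g (K⋆K)`, with `g` a continuous cutoff vanishing
below `(2ε)²` and equal to `1` above `(3ε)²`, one has `‖K (1 - Q)‖ ≤ 3ε`, while `‖K y‖ ≥ 2ε ‖y‖` on
the range of `Q`, which therefore contains no `(N + 1)`-dimensional subspace.
-/

open Filter Topology

theorem Submodule.exists_le_finrank_eq_of_not_finiteDimensional {K M : Type*} [DivisionRing K]
    [AddCommGroup M] [Module K M] {W : Submodule K M} (hW : ¬FiniteDimensional K W) (n : ℕ) :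
    ∃ V ≤ W, Module.finrank K V = n := by
  have hn : (n : Cardinal) ≤ Module.rank K W :=
    Cardinal.natCast_lt_aleph0.le.trans (not_lt.mp (hW ∘ Module.rank_lt_aleph0_iff.mp))
  obtain ⟨f, hf⟩ := exists_linearIndependent_of_le_rank hn
  refine ⟨(span K (Set.range f)).map W.subtype, Submodule.map_subtype_le _ _, ?_⟩
  rw [(Submodule.equivMapOfInjective _ W.injective_subtype _).symm.finrank_eq,
    finrank_span_eq_card hf, Fintype.card_fin]

theorem Submodule.exists_mem_ne_zero_apply_eq_zero {K M N : Type*} [DivisionRing K]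
    [AddCommGroup M] [Module K M] [AddCommGroup N] [Module K N] [FiniteDimensional K N]
    (V : Submodule K M) [FiniteDimensional K V] (f : M →ₗ[K] N)
    (hf : Module.finrank K (LinearMap.range f) < Module.finrank K V) :
    ∃ x ∈ V, x ≠ 0 ∧ f x = 0 := by
  have hker : LinearMap.ker (f ∘ₗ V.subtype) ≠ ⊥ := by
    intro hker
    have hrank := (f ∘ₗ V.subtype).finrank_range_add_finrank_ker
    have hle := Submodule.finrank_mono (LinearMap.range_comp_le_range V.subtype f)
    rw [hker, finrank_bot] at hrank
    omega
  obtain ⟨x, hx, hx0⟩ := Submodule.exists_mem_ne_zero_of_ne_bot hker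
  exact ⟨x, x.2, by simpa using hx0, hx⟩

theorem Matrix.finrank_range_toEuclideanLin {𝕜 m : Type*} [RCLike 𝕜] [Fintype m]
    [DecidableEq m] (A : Matrix m m 𝕜) :
    Module.finrank 𝕜 (LinearMap.range (toEuclideanLin A)) = A.rank := by
  rw [A.rank_eq_finrank_range_toLin (PiLp.basisFun 2 𝕜 m) (PiLp.basisFun 2 𝕜 m),
    ← toLpLin_eq_toLin]

section CompactOperator

variable {𝕜 E F G : Type*} [RCLike 𝕜] [NormedAddCommGroup E] [NormedSpace 𝕜 E]
  [NormedAddCommGroup F] [NormedSpace 𝕜 F] [NormedAddCommGroup G] [NormedSpace 𝕜 G]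
  {ι : Type*} {l : Filter ι} {T : ι → F →L[𝕜] G} {C : ℝ}

theorem ContinuousLinearMap.tendstoUniformlyOn_of_norm_le (hT : ∀ i, ‖T i‖ ≤ C)
    (h0 : ∀ y, Tendsto (fun i => T i y) l (𝓝 0)) {S : Set F} (hS : IsCompact S) :
    TendstoUniformlyOn (fun i => ⇑(T i)) 0 l S := by
  have hT' : Equicontinuous ((↑) ∘ T : ι → F → G) :=
    (show (∃ C, ∀ i, ‖T i‖ ≤ C) ↔ _ from (NormedSpace.equicontinuous_TFAE T).out 5 1).mp ⟨C, hT⟩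
  have := (EquicontinuousOn.tendsto_uniformOnFun_iff_pi (𝔖 := {s | IsCompact s}) (fun _ h => h)
    (Set.sUnion_eq_univ_iff.mpr fun x => ⟨{x}, isCompact_singleton, rfl⟩)
    (fun s _ => hT'.equicontinuousOn s) l 0).mpr (tendsto_pi_nhds.mpr h0)
  exact UniformOnFun.tendsto_iff_tendstoUniformlyOn.mp this S hS

theorem IsCompactOperator.tendsto_clm_comp {J : E →L[𝕜] F} (hJ : IsCompactOperator J)
    (hT : ∀ i, ‖T i‖ ≤ C) (h0 : ∀ y, Tendsto (fun i => T i y) l (𝓝 0)) :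
    Tendsto (fun i => T i ∘L J) l (𝓝 0) := by
  have hU := ContinuousLinearMap.tendstoUniformlyOn_of_norm_le hT h0
    (hJ.isCompact_closure_image_closedBall 1)
  refine Metric.tendsto_nhds.mpr fun ε hε => ?_
  filter_upwards [Metric.tendstoUniformlyOn_iff.mp hU (ε / 2) (half_pos hε)] with i hi
  rw [dist_zero_right]
  refine (ContinuousLinearMap.opNorm_le_of_unit_norm (half_pos hε).le fun x hx => ?_).trans_lt
    (half_lt_self hε)
  simpa using (hi (J x) (subset_closure ⟨x, by simp [hx], rfl⟩)).le

theorem ContinuousLinearMap.isCompactOperator_of_finiteDimensional_range (T : E →L[𝕜] F)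
    [FiniteDimensional 𝕜 (LinearMap.range (T : E →ₗ[𝕜] F))] : IsCompactOperator T :=
  (isCompactOperator_of_locallyCompactSpace_dom
    (T.codRestrict _ (LinearMap.mem_range_self (T : E →ₗ[𝕜] F)))).clm_comp
    (LinearMap.range (T : E →ₗ[𝕜] F)).subtypeL

end CompactOperator

theorem ContinuousLinearMap.norm_apply_le_of_star_mul_self_le {𝕜 H : Type*} [RCLike 𝕜]
    [NormedAddCommGroup H] [InnerProductSpace 𝕜 H] [CompleteSpace H] {S T : H →L[𝕜] H}
    (h : star S * S ≤ star T * T) (x : H) : ‖S x‖ ≤ ‖T x‖ := by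
  have hx := ((ContinuousLinearMap.le_def _ _).mp h).re_inner_nonneg_left x
  rw [_root_.sub_apply, inner_sub_left, map_sub, sub_nonneg] at hx
  rw [← sq_le_sq₀ (norm_nonneg _) (norm_nonneg _), apply_norm_sq_eq_inner_adjoint_left,
    apply_norm_sq_eq_inner_adjoint_left]
  exact hx

section FiniteRankApproximation

open ContinuousLinearMap

variable {H : Type*} [NormedAddCommGroup H] [InnerProductSpace ℂ H] [CompleteSpace H]
  {K : H →L[ℂ] H}

theorem le_norm_apply_cfc_star_mul_self {g : ℝ → ℝ} (hg : Continuous g) {c : ℝ} (hc : 0 ≤ c)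
    (hg_zero : ∀ t ≤ c ^ 2, g t = 0) (y : H) :
    c * ‖cfc g (star K * K) y‖ ≤ ‖K (cfc g (star K * K) y)‖ := by
  set Q := cfc g (star K * K)
  have hQ : IsSelfAdjoint Q := cfc_predicate _ _
  have hle : star (c • Q) * (c • Q) ≤ star (K * Q) * (K * Q) := by
    have hKQ : star (K * Q) * (K * Q) = cfc (fun t => g t * t * g t) (star K * K) := by
      rw [cfc_mul .., cfc_mul .., cfc_id' ℝ (star K * K), star_mul, hQ.star_eq]
      noncomm_ring
    have hcQ : star (c • Q) * (c • Q) = cfc (fun t => c ^ 2 * (g t * g t)) (star K * K) := by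
      rw [cfc_const_mul .., cfc_mul .., star_smul, hQ.star_eq, smul_mul_smul, star_trivial,
        ← pow_two]
    rw [hKQ, hcQ]
    refine cfc_mono fun t _ => ?_
    rcases le_or_gt t (c ^ 2) with ht | ht
    · simp [hg_zero t ht]
    · nlinarith [mul_self_nonneg (g t)]
  simpa [norm_smul, abs_of_nonneg hc] using norm_apply_le_of_star_mul_self_le hle y

theorem norm_apply_sub_cfc_star_mul_self_le {g : ℝ → ℝ} (hg : Continuous g) {d : ℝ} (hd : 0 ≤ d)
    (hg_mem : ∀ t, g t ∈ Set.Icc 0 1) (hg_one : ∀ t, d ^ 2 ≤ t → g t = 1) (x : H) :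
    ‖K (x - cfc g (star K * K) x)‖ ≤ d * ‖x‖ := by
  set Q := cfc g (star K * K)
  have hQ : IsSelfAdjoint Q := cfc_predicate _ _
  have hle : star (K * (1 - Q)) * (K * (1 - Q)) ≤ star (d • (1 : H →L[ℂ] H)) * (d • 1) := by
    have hKQ : star (K * (1 - Q)) * (K * (1 - Q)) =
        cfc (fun t => (1 - g t) * t * (1 - g t)) (star K * K) := by
      rw [cfc_mul .., cfc_mul .., cfc_id' ℝ (star K * K), cfc_sub .., cfc_const_one ℝ (star K * K),
        star_mul, star_sub, star_one, hQ.star_eq]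
      noncomm_ring
    have hd1 : star (d • (1 : H →L[ℂ] H)) * (d • 1) = cfc (fun _ => d ^ 2) (star K * K) := by
      rw [cfc_const .., star_smul, star_one, smul_mul_smul, one_mul, star_trivial, ← pow_two,
        Algebra.algebraMap_eq_smul_one]
    rw [hKQ, hd1]
    refine cfc_mono fun t _ => ?_
    rcases le_or_gt (d ^ 2) t with ht | ht
    · simp [hg_one t ht, sq_nonneg]
    · have hg_sq : (1 - g t) ^ 2 ≤ 1 := by nlinarith [(hg_mem t).1, (hg_mem t).2]
      rcases le_or_gt t 0 with ht0 | ht0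
      · nlinarith [sq_nonneg (1 - g t)]
      · nlinarith
  simpa [norm_smul, abs_of_nonneg hd, mul_sub] using norm_apply_le_of_star_mul_self_le hle x

theorem exists_isCompactOperator_norm_sub_le {N : ℕ} {ε : ℝ} (hε : 0 < ε)
    (hK : ∀ V : Submodule ℂ H, Module.finrank ℂ V = N + 1 → ∃ x ∈ V, x ≠ 0 ∧ ‖K x‖ ≤ ε * ‖x‖) :
    ∃ F : H →L[ℂ] H, IsCompactOperator F ∧ ‖K - F‖ ≤ 3 * ε := by
  obtain ⟨g, hg_zero, hg_one, hg_mem⟩ := exists_continuous_zero_one_of_isClosed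
    (isClosed_Iic (a := (2 * ε) ^ 2)) (isClosed_Ici (a := (3 * ε) ^ 2))
    (Set.Iic_disjoint_Ici.mpr (by nlinarith))
  set Q := cfc (⇑g) (star K * K)
  have hfin : FiniteDimensional ℂ (LinearMap.range (Q : H →ₗ[ℂ] H)) := by
    by_contra hW
    obtain ⟨V, hVQ, hV⟩ := Submodule.exists_le_finrank_eq_of_not_finiteDimensional hW (N + 1)
    obtain ⟨_, hxV, hx0, hKx⟩ := hK V hV
    obtain ⟨y, rfl⟩ := hVQ hxV
    rw [coe_coe] at hx0 hKx
    have hy := le_norm_apply_cfc_star_mul_self (K := K) g.continuous (by positivity)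
      (fun t ht => hg_zero ht) y
    nlinarith [norm_pos_iff.mpr hx0]
  refine ⟨K * Q, Q.isCompactOperator_of_finiteDimensional_range.clm_comp K,
    opNorm_le_bound _ (by positivity) fun x => ?_⟩
  simpa [mul_sub] using norm_apply_sub_cfc_star_mul_self_le g.continuous (by positivity) hg_mem
    (fun t ht => hg_one ht) x

theorem isCompactOperator_of_forall_finrank_eq_exists_norm_apply_le
    (hK : ∀ ε > 0, ∃ N : ℕ, ∀ V : Submodule ℂ H, Module.finrank ℂ V = N + 1 →
      ∃ x ∈ V, x ≠ 0 ∧ ‖K x‖ ≤ ε * ‖x‖) :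
    IsCompactOperator K := by
  refine isClosed_setOfPred_isCompactOperator.closure_subset
    (Metric.mem_closure_iff.mpr fun ε hε => ?_)
  obtain ⟨N, hN⟩ := hK (ε / 6) (by positivity)
  obtain ⟨F, hF, hKF⟩ := exists_isCompactOperator_norm_sub_le (by positivity) hN
  exact ⟨F, hF, by rw [dist_eq_norm]; linarith⟩

end FiniteRankApproximation

theorem HilbertBasis.completeSpace {ι 𝕜 H : Type*} [RCLike 𝕜] [NormedAddCommGroup H]
    [InnerProductSpace 𝕜 H] (b : HilbertBasis ι 𝕜 H) : CompleteSpace H :=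
  (b.repr.symm.isometry.isUniformInducing.completeSpace_congr b.repr.symm.surjective).mp
    inferInstance

namespace HilbertBasis

open scoped InnerProductSpace

section FiniteSection

variable {𝕜 H : Type*} [RCLike 𝕜] [NormedAddCommGroup H] [InnerProductSpace 𝕜 H]
  (e : HilbertBasis ℕ 𝕜 H) (n : ℕ)

theorem orthonormal_fin : Orthonormal 𝕜 fun i : Fin n => e i :=
  e.orthonormal.comp _ Fin.val_injective

def sectionIncl : EuclideanSpace 𝕜 (Fin n) →ₗᵢ[𝕜] H :=
  ((Fintype.linearCombination 𝕜 fun i : Fin n => e i) ∘ₗ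
    (WithLp.linearEquiv 2 𝕜 (Fin n → 𝕜)).toLinearMap).isometryOfInner fun x y => by
      simp [Fintype.linearCombination_apply, (e.orthonormal_fin n).inner_sum, PiLp.inner_apply,
        mul_comm]

theorem sectionIncl_apply (v : EuclideanSpace 𝕜 (Fin n)) :
    e.sectionIncl n v = ∑ i, v i • e i := rfl

def sectionRepr : H →L[𝕜] EuclideanSpace 𝕜 (Fin n) :=
  (EuclideanSpace.equiv (Fin n) 𝕜).symm.toContinuousLinearMap ∘L
    ContinuousLinearMap.pi fun i => innerSL 𝕜 (e i)

theorem sectionRepr_apply (x : H) (i : Fin n) : e.sectionRepr n x i = ⟪e i, x⟫_𝕜 := rfl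

theorem norm_sectionRepr_apply_le (x : H) : ‖e.sectionRepr n x‖ ≤ ‖x‖ := by
  rw [EuclideanSpace.norm_eq, Real.sqrt_le_left (norm_nonneg x)]
  exact (e.orthonormal_fin n).sum_inner_products_le x

def sectionProj : H →L[𝕜] H := (e.sectionIncl n).toContinuousLinearMap ∘L e.sectionRepr n

theorem norm_sectionProj_apply_le (x : H) : ‖e.sectionProj n x‖ ≤ ‖x‖ :=
  ((e.sectionIncl n).norm_map _).trans_le (e.norm_sectionRepr_apply_le n x)

theorem tendsto_sectionProj_apply (x : H) :
    Tendsto (fun n => e.sectionProj n x) atTop (𝓝 x) := by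
  convert (e.hasSum_repr x).tendsto_sum_nat using 2 with n
  simp [sectionProj, sectionIncl_apply, sectionRepr_apply, HilbertBasis.repr_apply_apply,
    ← Fin.sum_univ_eq_sum_range]

theorem tendsto_one_sub_sectionProj_comp {E : Type*} [NormedAddCommGroup E] [NormedSpace 𝕜 E]
    {J : E →L[𝕜] H} (hJ : IsCompactOperator J) :
    Tendsto (fun n => (1 - e.sectionProj n) ∘L J) atTop (𝓝 0) := by
  refine hJ.tendsto_clm_comp (C := 2) (fun n => ?_) fun x => ?_
  · refine ContinuousLinearMap.opNorm_le_bound _ zero_le_two fun x => ?_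
    rw [_root_.sub_apply, one_apply_eq_self, two_mul]
    exact (norm_sub_le _ _).trans (add_le_add_right (e.norm_sectionProj_apply_le n x) _)
  · simpa using (e.tendsto_sectionProj_apply x).const_sub x

/-- Mathlib's inner product is conjugate-linear in the first slot, so the entry `⟨K eⱼ, eᵢ⟩` of
the paper is `⟪eᵢ, K eⱼ⟫`. -/
def finiteSection (T : H →L[𝕜] H) (n : ℕ) : Matrix (Fin n) (Fin n) 𝕜 :=
  Matrix.of fun i j : Fin n => ⟪e i, T (e j)⟫_𝕜

variable {n}

theorem toEuclideanCLM_finiteSection (T : H →L[𝕜] H) :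
    toEuclideanCLM (𝕜 := 𝕜) (e.finiteSection T n) =
      e.sectionRepr n ∘L T ∘L (e.sectionIncl n).toContinuousLinearMap := by
  ext v i
  simp [ofLp_toEuclideanCLM, mulVec, dotProduct, finiteSection, sectionRepr_apply,
    sectionIncl_apply, mul_comm]

theorem norm_toEuclideanCLM_finiteSection_le (T : H →L[𝕜] H) :
    ‖toEuclideanCLM (𝕜 := 𝕜) (e.finiteSection T n)‖ ≤ ‖T‖ := by
  rw [toEuclideanCLM_finiteSection]
  refine ContinuousLinearMap.opNorm_le_bound _ (norm_nonneg T) fun v => ?_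
  calc ‖e.sectionRepr n (T (e.sectionIncl n v))‖ ≤ ‖T (e.sectionIncl n v)‖ :=
        e.norm_sectionRepr_apply_le n _
    _ ≤ ‖T‖ * ‖v‖ := by simpa using T.le_opNorm (e.sectionIncl n v)

theorem finiteSection_add (S T : H →L[𝕜] H) :
    e.finiteSection (S + T) n = e.finiteSection S n + e.finiteSection T n := by
  ext i j
  simp [finiteSection, inner_add_right]

theorem rank_finiteSection_sectionProj_comp_le (T : H →L[𝕜] H) (m : ℕ) :
    (e.finiteSection (e.sectionProj m ∘L T) n).rank ≤ m := by
  rw [← finrank_range_toEuclideanLin, ← coe_toEuclideanCLM_eq_toEuclideanLin,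
    toEuclideanCLM_finiteSection]
  calc _ ≤ Module.finrank 𝕜 (LinearMap.range
        (e.sectionRepr n ∘L (e.sectionIncl m).toContinuousLinearMap : _ →ₗ[𝕜] _)) :=
        Submodule.finrank_mono (by rintro _ ⟨v, rfl⟩; exact ⟨_, rfl⟩)
    _ ≤ m := (LinearMap.finrank_range_le _).trans finrank_euclideanSpace_fin.le

end FiniteSection

section Cluster

variable {H : Type*} [NormedAddCommGroup H] [InnerProductSpace ℂ H] (e : HilbertBasis ℕ ℂ H)
  {K : H →L[ℂ] H}

theorem type2StrongCluster_finiteSection_of_isCompactOperator (hK : IsCompactOperator K) :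
    Type2StrongCluster (e.finiteSection K) := by
  intro ε hε
  obtain ⟨m, hm⟩ :=
    ((e.tendsto_one_sub_sectionProj_comp hK).eventually (Metric.ball_mem_nhds 0 hε)).exists
  refine ⟨m, 0, fun n _ => ⟨e.finiteSection (e.sectionProj m ∘L K) n,
    e.finiteSection ((1 - e.sectionProj m) ∘L K) n, ?_,
    e.rank_finiteSection_sectionProj_comp_le K m, ?_⟩⟩
  · rw [← finiteSection_add, ← ContinuousLinearMap.add_comp, add_sub_cancel,
      ContinuousLinearMap.one_def, ContinuousLinearMap.id_comp]
  · exact (e.norm_toEuclideanCLM_finiteSection_le _).trans_lt (mem_ball_zero_iff.mp hm)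

theorem norm_apply_le_of_finiteSection_eq_add {n : ℕ} {R E : Matrix (Fin n) (Fin n) ℂ}
    (hRE : e.finiteSection K n = R + E) {x : H}
    (hx : toEuclideanCLM (𝕜 := ℂ) R (e.sectionRepr n x) = 0) :
    ‖K x‖ ≤
      ‖(1 - e.sectionProj n) (K x)‖ + ‖K‖ * ‖(1 - e.sectionProj n) x‖ + opNorm E * ‖x‖ := by
  set P := e.sectionProj n
  have hPKP : e.sectionRepr n (K (P x)) = toEuclideanCLM (𝕜 := ℂ) E (e.sectionRepr n x) := by
    have := congrArg (fun A => toEuclideanCLM (𝕜 := ℂ) A (e.sectionRepr n x)) hRE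
    simp only [toEuclideanCLM_finiteSection, map_add, _root_.add_apply, hx, zero_add] at this
    exact this
  calc ‖K x‖ = ‖(1 - P) (K x) + P (K ((1 - P) x)) + P (K (P x))‖ := by
        simp only [_root_.sub_apply, one_apply_eq_self, map_sub]
        abel_nf
    _ ≤ ‖(1 - P) (K x)‖ + ‖P (K ((1 - P) x))‖ + ‖P (K (P x))‖ := norm_add₃_le
    _ ≤ ‖(1 - P) (K x)‖ + ‖K‖ * ‖(1 - P) x‖ + opNorm E * ‖x‖ := by
        gcongr
        · exact (e.norm_sectionProj_apply_le n _).trans (K.le_opNorm _)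
        · change ‖e.sectionIncl n (e.sectionRepr n (K (P x)))‖ ≤ _
          rw [LinearIsometry.norm_map, hPKP]
          exact (ContinuousLinearMap.le_opNorm _ _).trans
            (mul_le_mul_of_nonneg_left (e.norm_sectionRepr_apply_le n x) (norm_nonneg _))

theorem forall_finrank_eq_exists_norm_apply_le_of_type2StrongCluster
    (h : Type2StrongCluster (e.finiteSection K)) (δ : ℝ) (hδ : 0 < δ) :
    ∃ N : ℕ, ∀ V : Submodule ℂ H, Module.finrank ℂ V = N + 1 →
      ∃ x ∈ V, x ≠ 0 ∧ ‖K x‖ ≤ δ * ‖x‖ := by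
  set ε := δ / (‖K‖ + 2)
  have hε : 0 < ε := by positivity
  obtain ⟨N, N', hsplit⟩ := h ε hε
  refine ⟨N, fun V hV => ?_⟩
  have : FiniteDimensional ℂ V := Module.finite_of_finrank_eq_succ hV
  have hι := isCompactOperator_of_locallyCompactSpace_rng V.subtypeL
  obtain ⟨n, hn, hιn, hKιn⟩ := ((eventually_gt_atTop N').and
    (((e.tendsto_one_sub_sectionProj_comp hι).eventually (Metric.ball_mem_nhds 0 hε)).and
      ((e.tendsto_one_sub_sectionProj_comp (J := K ∘L V.subtypeL) (hι.clm_comp K)).eventually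
        (Metric.ball_mem_nhds 0 hε)))).exists
  rw [dist_zero_right] at hιn hKιn
  obtain ⟨R, E, hRE, hR, hE⟩ := hsplit n hn
  obtain ⟨x, hxV, hx0, hx⟩ := V.exists_mem_ne_zero_apply_eq_zero
    (toEuclideanLin R ∘ₗ (e.sectionRepr n : H →ₗ[ℂ] EuclideanSpace ℂ (Fin n)))
    ((Submodule.finrank_mono (LinearMap.range_comp_le_range _ _)).trans_lt
      ((finrank_range_toEuclideanLin R).trans_lt (hR.trans_lt (hV ▸ N.lt_succ_self))))
  refine ⟨x, hxV, hx0, (e.norm_apply_le_of_finiteSection_eq_add hRE hx).trans ?_⟩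
  have hKx : ‖(1 - e.sectionProj n) (K x)‖ ≤ ε * ‖x‖ :=
    (((1 - e.sectionProj n) ∘L K ∘L V.subtypeL).le_opNorm ⟨x, hxV⟩).trans
      (mul_le_mul_of_nonneg_right hKιn.le (norm_nonneg _))
  have hx' : ‖(1 - e.sectionProj n) x‖ ≤ ε * ‖x‖ :=
    (((1 - e.sectionProj n) ∘L V.subtypeL).le_opNorm ⟨x, hxV⟩).trans
      (mul_le_mul_of_nonneg_right hιn.le (norm_nonneg _))
  calc _ ≤ ε * ‖x‖ + ‖K‖ * (ε * ‖x‖) + ε * ‖x‖ := by gcongr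
    _ = δ * ‖x‖ := by
        simp only [ε]
        field_simp
        ring

end Cluster

end HilbertBasis

/-- Lemma 2.4 of the paper: a bounded operator `K` on a Hilbert
space with Hilbert basis `(eᵢ)_{i∈ℕ}` is compact iff its finite sections
`Aₙ = (⟨K eⱼ, eᵢ⟩)_{0 ≤ i,j < n}` converge to the zero sequence in Type 2 strong
cluster sense.  (Mathlib's inner product is conjugate-linear in the first slot, so the
mathematicians' `⟨K eⱼ, eᵢ⟩` is `⟪eᵢ, K eⱼ⟫`.) -/
theorem isCompactOperator_iff_finiteSections_cluster
    {H : Type*} [NormedAddCommGroup H] [InnerProductSpace ℂ H]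
    (e : HilbertBasis ℕ ℂ H) (K : H →L[ℂ] H) :
    IsCompactOperator (⇑K) ↔
      Type2StrongCluster (fun n =>
        Matrix.of fun i j : Fin n =>
          (inner ℂ (e (i : ℕ)) (K (e (j : ℕ))) : ℂ)) := by
  have := e.completeSpace
  exact ⟨e.type2StrongCluster_finiteSection_of_isCompactOperator, fun h =>
    isCompactOperator_of_forall_finrank_eq_exists_norm_apply_le
      (e.forall_finrank_eq_exists_norm_apply_le_of_type2StrongCluster h)⟩
end
end

section
/- Let 𝒜 be a C*-algebra, H a complex Hilbert space, and Φ : 𝒜 → B(H) a linear map satisfying Φ(a*) = Φ(a)* and Φ(a)* ∘ Φ(a) ≤ Φ(a* a) for all a ∈ 𝒜 (a Schwarz map). For f, g ∈ 𝒜 set X = Φ(f* f) − Φ(f)* Φ(f), Y = Φ(g* g) − Φ(g)* Φ(g) (both positive operators), and Z = Φ(f* g) − Φ(f)* Φ(g). Then for every x ∈ H, |⟨Z x, x⟩|² ≤ ⟨X x, x⟩ · ⟨Y x, x⟩, where ⟨X x, x⟩ and ⟨Y x, x⟩ are nonnegative real numbers. -/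
/-! For a fixed vector `x`, the Schwarz defect `(a, b) ↦ ⟨(Φ(a* b) − Φ(a)* Φ(b)) x, x⟩` is a
sesquilinear form on `𝒜`: conjugate symmetric because `Φ` preserves adjoints, and positive
semidefinite by the Schwarz inequality. Uchiyama's inequality is the Cauchy–Schwarz inequality
for this form. -/

open MeasureTheory Matrix
open scoped Real ComplexOrder

noncomputable section

/-- The vector state `T ↦ ⟨T x, x⟩` attached to `x ∈ H` (Mathlib's inner product is
conjugate-linear in the first slot, so the mathematicians' `⟨T x, x⟩` is `⟪x, T x⟫`). -/
def vecState {H : Type*} [NormedAddCommGroup H] [InnerProductSpace ℂ H]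
    (x : H) (T : H →L[ℂ] H) : ℂ :=
  inner ℂ x (T x)

open ContinuousLinearMap ComplexConjugate

section VecState

variable {H : Type*} [NormedAddCommGroup H] [InnerProductSpace ℂ H]

theorem vecState_add (x : H) (S T : H →L[ℂ] H) :
    vecState x (S + T) = vecState x S + vecState x T :=
  inner_add_right _ _ _

theorem vecState_smul (x : H) (r : ℂ) (T : H →L[ℂ] H) :
    vecState x (r • T) = r * vecState x T :=
  inner_smul_right _ _ _

theorem vecState_adjoint [CompleteSpace H] (x : H) (T : H →L[ℂ] H) :
    vecState x (adjoint T) = conj (vecState x T) := by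
  rw [vecState, vecState, adjoint_inner_right, inner_conj_symm]

end VecState

section SchwarzDefect

variable {𝒜 : Type*} [NonUnitalRing 𝒜] [StarRing 𝒜] [Module ℂ 𝒜]
  {H : Type*} [NormedAddCommGroup H] [InnerProductSpace ℂ H] [CompleteSpace H]
  (Φ : 𝒜 →ₗ[ℂ] (H →L[ℂ] H))

def schwarzDefect (a b : 𝒜) : H →L[ℂ] H :=
  Φ (star a * b) - adjoint (Φ a) ∘L Φ b

theorem schwarzDefect_add_left (a b c : 𝒜) :
    schwarzDefect Φ (a + b) c = schwarzDefect Φ a c + schwarzDefect Φ b c := by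
  simp only [schwarzDefect, star_add, add_mul, map_add, add_comp]
  abel

theorem schwarzDefect_smul_left [IsScalarTower ℂ 𝒜 𝒜] [StarModule ℂ 𝒜] (r : ℂ) (a b : 𝒜) :
    schwarzDefect Φ (r • a) b = conj r • schwarzDefect Φ a b := by
  simp only [schwarzDefect, star_smul, smul_mul_assoc, map_smul, map_smulₛₗ, smul_comp,
    smul_sub]
  rfl

variable {Φ}

theorem adjoint_schwarzDefect (hstar : ∀ a : 𝒜, Φ (star a) = adjoint (Φ a)) (a b : 𝒜) :
    adjoint (schwarzDefect Φ a b) = schwarzDefect Φ b a := by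
  simp only [schwarzDefect, map_sub, adjoint_comp, ← hstar, star_mul, star_star]

abbrev schwarzDefectCore [IsScalarTower ℂ 𝒜 𝒜] [StarModule ℂ 𝒜]
    (hstar : ∀ a : 𝒜, Φ (star a) = adjoint (Φ a))
    (hschwarz : ∀ a : 𝒜, (schwarzDefect Φ a a).IsPositive) (x : H) :
    PreInnerProductSpace.Core ℂ 𝒜 where
  inner a b := vecState x (schwarzDefect Φ a b)
  conj_inner_symm a b := by
    rw [← vecState_adjoint, adjoint_schwarzDefect hstar]
  re_inner_nonneg a := (hschwarz a).re_inner_nonneg_right x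
  add_left a b c := by
    rw [schwarzDefect_add_left, vecState_add]
  smul_left a b r := by
    rw [schwarzDefect_smul_left, vecState_smul]

theorem norm_vecState_schwarzDefect_sq_le [IsScalarTower ℂ 𝒜 𝒜] [StarModule ℂ 𝒜]
    (hstar : ∀ a : 𝒜, Φ (star a) = adjoint (Φ a))
    (hschwarz : ∀ a : 𝒜, (schwarzDefect Φ a a).IsPositive) (x : H) (a b : 𝒜) :
    ‖vecState x (schwarzDefect Φ a b)‖ ^ 2 ≤
      (vecState x (schwarzDefect Φ a a)).re * (vecState x (schwarzDefect Φ b b)).re := by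
  let := schwarzDefectCore hstar hschwarz x
  calc ‖vecState x (schwarzDefect Φ a b)‖ ^ 2
      = ‖vecState x (schwarzDefect Φ a b)‖ * ‖vecState x (schwarzDefect Φ b a)‖ := by
        rw [sq, ← adjoint_schwarzDefect hstar, vecState_adjoint, RCLike.norm_conj]
    _ ≤ _ := InnerProductSpace.Core.inner_mul_inner_self_le (𝕜 := ℂ) a b

end SchwarzDefect

theorem uchiyama_inequality_general
    {𝒜 : Type*} [NormedRing 𝒜] [StarRing 𝒜]
    [NormedAlgebra ℂ 𝒜] [StarModule ℂ 𝒜]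
    {H : Type*} [NormedAddCommGroup H] [InnerProductSpace ℂ H] [CompleteSpace H]
    (Φ : 𝒜 →ₗ[ℂ] (H →L[ℂ] H))
    (hstar : ∀ a : 𝒜, Φ (star a) = ContinuousLinearMap.adjoint (Φ a))
    (hschwarz : ∀ a : 𝒜,
      (Φ (star a * a) - ContinuousLinearMap.adjoint (Φ a) ∘L Φ a).IsPositive)
    (f g : 𝒜) (x : H) :
    ((vecState x (Φ (star f * f) - ContinuousLinearMap.adjoint (Φ f) ∘L Φ f)).im = 0 ∧
      0 ≤ (vecState x (Φ (star f * f) - ContinuousLinearMap.adjoint (Φ f) ∘L Φ f)).re ∧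
      (vecState x (Φ (star g * g) - ContinuousLinearMap.adjoint (Φ g) ∘L Φ g)).im = 0 ∧
      0 ≤ (vecState x (Φ (star g * g) - ContinuousLinearMap.adjoint (Φ g) ∘L Φ g)).re) ∧
    ‖vecState x (Φ (star f * g) - ContinuousLinearMap.adjoint (Φ f) ∘L Φ g)‖ ^ 2
      ≤ (vecState x (Φ (star f * f) - ContinuousLinearMap.adjoint (Φ f) ∘L Φ f)).re *
        (vecState x (Φ (star g * g) - ContinuousLinearMap.adjoint (Φ g) ∘L Φ g)).re := by
  obtain ⟨hf_re, hf_im⟩ := Complex.nonneg_iff.mp ((hschwarz f).inner_nonneg_right x)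
  obtain ⟨hg_re, hg_im⟩ := Complex.nonneg_iff.mp ((hschwarz g).inner_nonneg_right x)
  exact ⟨⟨hf_im.symm, hf_re, hg_im.symm, hg_re⟩,
    norm_vecState_schwarzDefect_sq_le hstar hschwarz x f g⟩

/-- Uchiyama's inequality for Schwarz maps with respect to the
operator product, evaluated at vector states: if `Φ : 𝒜 → B(H)` is linear,
`*`-preserving, and satisfies the Schwarz inequality `Φ(a)* Φ(a) ≤ Φ(a* a)` (i.e.
`Φ(a* a) − Φ(a)* Φ(a)` is a positive operator), then with
`X = Φ(f* f) − Φ(f)* Φ(f)`, `Y = Φ(g* g) − Φ(g)* Φ(g)` and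
`Z = Φ(f* g) − Φ(f)* Φ(g)`, for every `x ∈ H` the quantities `⟨X x, x⟩`, `⟨Y x, x⟩`
are nonnegative real numbers and `|⟨Z x, x⟩|² ≤ ⟨X x, x⟩ · ⟨Y x, x⟩`. -/
theorem uchiyama_inequality
    {𝒜 : Type*} [NormedRing 𝒜] [StarRing 𝒜] [CStarRing 𝒜]
    [NormedAlgebra ℂ 𝒜] [StarModule ℂ 𝒜]
    {H : Type*} [NormedAddCommGroup H] [InnerProductSpace ℂ H] [CompleteSpace H]
    (Φ : 𝒜 →ₗ[ℂ] (H →L[ℂ] H))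
    (hstar : ∀ a : 𝒜, Φ (star a) = ContinuousLinearMap.adjoint (Φ a))
    (hschwarz : ∀ a : 𝒜,
      (Φ (star a * a) - ContinuousLinearMap.adjoint (Φ a) ∘L Φ a).IsPositive)
    (f g : 𝒜) (x : H) :
    ((vecState x (Φ (star f * f) - ContinuousLinearMap.adjoint (Φ f) ∘L Φ f)).im = 0 ∧
      0 ≤ (vecState x (Φ (star f * f) - ContinuousLinearMap.adjoint (Φ f) ∘L Φ f)).re ∧
      (vecState x (Φ (star g * g) - ContinuousLinearMap.adjoint (Φ g) ∘L Φ g)).im = 0 ∧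
      0 ≤ (vecState x (Φ (star g * g) - ContinuousLinearMap.adjoint (Φ g) ∘L Φ g)).re) ∧
    ‖vecState x (Φ (star f * g) - ContinuousLinearMap.adjoint (Φ f) ∘L Φ g)‖ ^ 2
      ≤ (vecState x (Φ (star f * f) - ContinuousLinearMap.adjoint (Φ f) ∘L Φ f)).re *
        (vecState x (Φ (star g * g) - ContinuousLinearMap.adjoint (Φ g) ∘L Φ g)).re :=
  uchiyama_inequality_general Φ hstar hschwarz f g x

end
end

section
/- Let f and g be essentially bounded measurable functions on the circle 𝕋 = AddCircle (2π), let n ≥ 1, and let x ∈ ℂⁿ. Then |⟨(T_n(f̄g) − T_n(f̄)·T_n(g)) x, x⟩|² ≤ ⟨(T_n(|f|²) − T_n(f̄)·T_n(f)) x, x⟩ · ⟨(T_n(|g|²) − T_n(ḡ)·T_n(g)) x, x⟩, where the two factors on the right-hand side are nonnegative real numbers. -/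
open MeasureTheory Matrix AddCircle
open scoped Real ComplexOrder

noncomputable section

/-- The quadratic form `x ↦ ⟨A x, x⟩ = (star x) ⬝ᵥ (A *ᵥ x)` of an `n × n` matrix. -/
def quadForm {n : ℕ} (A : Matrix (Fin n) (Fin n) ℂ) (x : Fin n → ℂ) : ℂ :=
  star x ⬝ᵥ A.mulVec x

/-!
Write `p = ∑ⱼ xⱼ eⱼ` with `eⱼ = fourier j`. The `k`-th entry of `Tₙ(b) x` is the Fourier
coefficient `(b p)^(k) = ⟪eₖ, b p⟫`, and `⟪Tₙ(ā b) x, x⟫ = ∫ p̄ ā b p = ⟪a p, b p⟫` in `L²(𝕋)`.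
Hence `⟪(Tₙ(ā b) - Tₙ(a)ᴴ Tₙ(b)) x, x⟫ = ⟪a p, b p⟫ - ∑_{k<n} conj ⟪eₖ, a p⟫ ⟪eₖ, b p⟫` is the
inner product of the components of `a p` and `b p` orthogonal to `e₀, …, eₙ₋₁`, and Uchiyama's
inequality becomes the Cauchy–Schwarz inequality in `L²(𝕋)`.
-/

open scoped InnerProductSpace ComplexConjugate

theorem Orthonormal.inner_sub_sum_inner_smul {𝕜 E ι : Type*} [RCLike 𝕜] [NormedAddCommGroup E]
    [InnerProductSpace 𝕜 E] {v : ι → E} (hv : Orthonormal 𝕜 v) (s : Finset ι) (x y : E) :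
    ⟪x - ∑ i ∈ s, ⟪v i, x⟫_𝕜 • v i, y - ∑ i ∈ s, ⟪v i, y⟫_𝕜 • v i⟫_𝕜
      = ⟪x, y⟫_𝕜 - ∑ i ∈ s, conj ⟪v i, x⟫_𝕜 * ⟪v i, y⟫_𝕜 := by
  have hx : ⟪x, ∑ i ∈ s, ⟪v i, y⟫_𝕜 • v i⟫_𝕜 = ∑ i ∈ s, conj ⟪v i, x⟫_𝕜 * ⟪v i, y⟫_𝕜 := by
    simp only [inner_sum, inner_smul_right, inner_conj_symm, mul_comm]
  have hy : ⟪∑ i ∈ s, ⟪v i, x⟫_𝕜 • v i, y⟫_𝕜 = ∑ i ∈ s, conj ⟪v i, x⟫_𝕜 * ⟪v i, y⟫_𝕜 := by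
    simp only [sum_inner, inner_smul_left]
  rw [inner_sub_left, inner_sub_right, inner_sub_right, hx, hy, hv.inner_sum]
  ring

theorem quadForm_sub {n : ℕ} (A B : Matrix (Fin n) (Fin n) ℂ) (x : Fin n → ℂ) :
    quadForm (A - B) x = quadForm A x - quadForm B x := by
  simp only [quadForm, sub_mulVec, dotProduct_sub]

theorem quadForm_conjTranspose_mul {n : ℕ} (A B : Matrix (Fin n) (Fin n) ℂ) (x : Fin n → ℂ) :
    quadForm (Aᴴ * B) x = star (A *ᵥ x) ⬝ᵥ B *ᵥ x := by
  rw [quadForm, ← mulVec_mulVec, dotProduct_mulVec, ← star_star x, ← star_mulVec, star_star]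

section FourierCoeff

variable {T : ℝ} [Fact (0 < T)]

theorem fourierCoeff_mul_fourier (h : AddCircle T → ℂ) (m k : ℤ) :
    fourierCoeff (fun t => h t * fourier m t) k = fourierCoeff h (k - m) := by
  refine integral_congr_ae (Filter.Eventually.of_forall fun t => ?_)
  simp only [smul_eq_mul]
  rw [show -(k - m) = -k + m by ring, fourier_add]
  ring

theorem inner_fourierLp_toLp {u : AddCircle T → ℂ} (hu : MemLp u 2 haarAddCircle) (k : ℤ) :
    ⟪fourierLp 2 k, hu.toLp u⟫_ℂ = fourierCoeff u k := by
  rw [← coe_fourierBasis, ← fourierBasis.repr_apply_apply, fourierBasis_repr,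
    fourierCoeff_congr_ae hu.coeFn_toLp]

end FourierCoeff

theorem MeasureTheory.MemLp.inner_toLp_toLp {α 𝕜 : Type*} [MeasurableSpace α] [RCLike 𝕜]
    {μ : Measure α} {u v : α → 𝕜} (hu : MemLp u 2 μ) (hv : MemLp v 2 μ) :
    ⟪hu.toLp u, hv.toLp v⟫_𝕜 = ∫ t, conj (u t) * v t ∂μ := by
  rw [L2.inner_def]
  refine integral_congr_ae ?_
  filter_upwards [hu.coeFn_toLp, hv.coeFn_toLp] with t hut hvt
  rw [hut, hvt, RCLike.inner_apply, mul_comm]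

def trigPoly {n : ℕ} (x : Fin n → ℂ) (t : 𝕋) : ℂ :=
  ∑ j : Fin n, x j * fourier (j : ℤ) t

theorem memLp_top_trigPoly {n : ℕ} (x : Fin n → ℂ) : MemLp (trigPoly x) ⊤ haarAddCircle := by
  have : Continuous (trigPoly x) := by unfold trigPoly; fun_prop
  exact this.memLp_top_of_hasCompactSupport (.of_compactSpace _) _

theorem fourierCoeff_mul_trigPoly {h : 𝕋 → ℂ} (hh : Integrable h haarAddCircle) {n : ℕ}
    (x : Fin n → ℂ) (k : ℤ) :
    fourierCoeff (fun t => h t * trigPoly x t) k = ∑ j : Fin n, x j * fourierCoeff h (k - j) := by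
  have hsum : (fun t => h t * trigPoly x t)
      = ∑ j : Fin n, fun t => x j * (h t * fourier j t) := by
    ext t
    simp only [trigPoly, Finset.mul_sum, Finset.sum_apply]
    exact Finset.sum_congr rfl fun j _ => by ring
  have hint (j : Fin n) : Integrable (fun t => x j * (h t * fourier (j : ℤ) t)) haarAddCircle := by
    simpa only [smul_eq_mul, mul_comm (fourier _ _)] using
      (hh.fourier_smul (j : ℤ)).const_mul (x j)
  rw [hsum, fourierCoeff.sum _ _ fun j _ => hint j, Finset.sum_apply]
  simp only [fourierCoeff.const_mul, fourierCoeff_mul_fourier]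

theorem toeplitz_mulVec {h : 𝕋 → ℂ} (hh : Integrable h haarAddCircle) {n : ℕ} (x : Fin n → ℂ) :
    toeplitz n h *ᵥ x = fun k : Fin n => fourierCoeff (fun t => h t * trigPoly x t) k := by
  ext k
  rw [fourierCoeff_mul_trigPoly hh]
  simp only [mulVec, dotProduct, toeplitz, of_apply, mul_comm]

theorem quadForm_toeplitz {h : 𝕋 → ℂ} (hh : Integrable h haarAddCircle) {n : ℕ} (x : Fin n → ℂ) :
    quadForm (toeplitz n h) x
      = ∫ t, conj (trigPoly x t) * (h t * trigPoly x t) ∂haarAddCircle := by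
  have hint : Integrable (fun t => h t * trigPoly x t) haarAddCircle :=
    hh.mul_of_top_left (memLp_top_trigPoly x)
  calc quadForm (toeplitz n h) x
      = ∑ k : Fin n,
          ∫ t, conj (x k) * (fourier (-(k : ℤ)) t * (h t * trigPoly x t)) ∂haarAddCircle := by
        simp only [quadForm, toeplitz_mulVec hh, dotProduct, fourierCoeff, smul_eq_mul,
          Pi.star_apply, RCLike.star_def, integral_const_mul]
    _ = ∫ t, conj (trigPoly x t) * (h t * trigPoly x t) ∂haarAddCircle := by
        rw [← integral_finsetSum]
        · refine integral_congr_ae (Filter.Eventually.of_forall fun t => ?_)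
          simp only [trigPoly, map_sum, map_mul, Finset.sum_mul, fourier_neg, mul_assoc]
        · exact fun k _ => (hint.fourier_smul _).const_mul _

theorem memLp_two_mul_trigPoly {a : 𝕋 → ℂ} (ha : MemLp a 2 haarAddCircle) {n : ℕ}
    (x : Fin n → ℂ) : MemLp (fun t => a t * trigPoly x t) 2 haarAddCircle :=
  (memLp_top_trigPoly x).mul' ha

def mulTrigPolyLp {a : 𝕋 → ℂ} (ha : MemLp a 2 haarAddCircle) {n : ℕ} (x : Fin n → ℂ) :
    Lp ℂ 2 (haarAddCircle : Measure 𝕋) :=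
  (memLp_two_mul_trigPoly ha x).toLp

def highFreqPart {a : 𝕋 → ℂ} (ha : MemLp a 2 haarAddCircle) {n : ℕ} (x : Fin n → ℂ) :
    Lp ℂ 2 (haarAddCircle : Measure 𝕋) :=
  mulTrigPolyLp ha x - ∑ k : Fin n, ⟪fourierLp 2 (k : ℤ), mulTrigPolyLp ha x⟫_ℂ • fourierLp 2 k

theorem quadForm_toeplitz_sub_conjTranspose_mul {a b : 𝕋 → ℂ} (ha : MemLp a 2 haarAddCircle)
    (hb : MemLp b 2 haarAddCircle) {n : ℕ} (x : Fin n → ℂ) :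
    quadForm (toeplitz n (fun t => conj (a t) * b t) - (toeplitz n a)ᴴ * toeplitz n b) x
      = ⟪highFreqPart ha x, highFreqPart hb x⟫_ℂ := by
  have he : Orthonormal ℂ fun k : Fin n => (fourierLp (T := 2 * π) 2 k : Lp ℂ 2 haarAddCircle) :=
    orthonormal_fourier.comp _ (Nat.cast_injective.comp Fin.val_injective)
  have hab : Integrable (fun t => conj (a t) * b t) haarAddCircle := ha.star.integrable_mul hb
  rw [highFreqPart, highFreqPart, he.inner_sub_sum_inner_smul, quadForm_sub,
    quadForm_toeplitz hab, quadForm_conjTranspose_mul, toeplitz_mulVec (ha.integrable one_le_two),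
    toeplitz_mulVec (hb.integrable one_le_two), mulTrigPolyLp, mulTrigPolyLp,
    MemLp.inner_toLp_toLp]
  simp only [inner_fourierLp_toLp, dotProduct, Pi.star_apply, RCLike.star_def, map_mul]
  congr 1
  refine integral_congr_ae (Filter.Eventually.of_forall fun t => ?_)
  ring

theorem uchiyama_inequality_toeplitz_general (f g : 𝕋 → ℂ)
    (hf : MemLp f ⊤ haarAddCircle) (hg : MemLp g ⊤ haarAddCircle)
    (n : ℕ) (x : Fin n → ℂ) :
    ((quadForm (toeplitz n (fun t => f t * (starRingEnd ℂ) (f t))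
        - (toeplitz n f)ᴴ * toeplitz n f) x).im = 0 ∧
      0 ≤ (quadForm (toeplitz n (fun t => f t * (starRingEnd ℂ) (f t))
        - (toeplitz n f)ᴴ * toeplitz n f) x).re ∧
      (quadForm (toeplitz n (fun t => g t * (starRingEnd ℂ) (g t))
        - (toeplitz n g)ᴴ * toeplitz n g) x).im = 0 ∧
      0 ≤ (quadForm (toeplitz n (fun t => g t * (starRingEnd ℂ) (g t))
        - (toeplitz n g)ᴴ * toeplitz n g) x).re) ∧
    ‖quadForm (toeplitz n (fun t => (starRingEnd ℂ) (f t) * g t)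
        - (toeplitz n f)ᴴ * toeplitz n g) x‖ ^ 2
      ≤ (quadForm (toeplitz n (fun t => f t * (starRingEnd ℂ) (f t))
          - (toeplitz n f)ᴴ * toeplitz n f) x).re *
        (quadForm (toeplitz n (fun t => g t * (starRingEnd ℂ) (g t))
          - (toeplitz n g)ᴴ * toeplitz n g) x).re := by
  have hf₂ := hf.mono_exponent (p := 2) le_top
  have hg₂ := hg.mono_exponent (p := 2) le_top
  simp only [mul_comm (f _) (conj _), mul_comm (g _) (conj _),
    quadForm_toeplitz_sub_conjTranspose_mul hf₂ hg₂,
    quadForm_toeplitz_sub_conjTranspose_mul hf₂ hf₂,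
    quadForm_toeplitz_sub_conjTranspose_mul hg₂ hg₂]
  set u := highFreqPart hf₂ x
  set w := highFreqPart hg₂ x
  refine ⟨⟨inner_self_im (𝕜 := ℂ) u, inner_self_nonneg (𝕜 := ℂ), inner_self_im (𝕜 := ℂ) w,
    inner_self_nonneg (𝕜 := ℂ)⟩, ?_⟩
  rw [sq]
  nth_rw 2 [norm_inner_symm]
  exact inner_mul_inner_self_le u w

/-- Uchiyama's inequality applied to the Schwarz maps `h ↦ Tₙ(h)`,
with vector states: for essentially bounded `f, g`, `n ≥ 1` and `x ∈ ℂⁿ`,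
`|⟨(Tₙ(f̄g) − Tₙ(f̄)Tₙ(g)) x, x⟩|² ≤ ⟨(Tₙ(|f|²) − Tₙ(f̄)Tₙ(f)) x, x⟩ ·
⟨(Tₙ(|g|²) − Tₙ(ḡ)Tₙ(g)) x, x⟩`, the two right-hand factors being nonnegative reals.
Here `Tₙ(h̄) = (Tₙ h)ᴴ`. -/
theorem uchiyama_inequality_toeplitz (f g : 𝕋 → ℂ)
    (hf : MemLp f ⊤ haarAddCircle) (hg : MemLp g ⊤ haarAddCircle)
    (n : ℕ) (hn : 1 ≤ n) (x : Fin n → ℂ) :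
    ((quadForm (toeplitz n (fun t => f t * (starRingEnd ℂ) (f t))
        - (toeplitz n f)ᴴ * toeplitz n f) x).im = 0 ∧
      0 ≤ (quadForm (toeplitz n (fun t => f t * (starRingEnd ℂ) (f t))
        - (toeplitz n f)ᴴ * toeplitz n f) x).re ∧
      (quadForm (toeplitz n (fun t => g t * (starRingEnd ℂ) (g t))
        - (toeplitz n g)ᴴ * toeplitz n g) x).im = 0 ∧
      0 ≤ (quadForm (toeplitz n (fun t => g t * (starRingEnd ℂ) (g t))
        - (toeplitz n g)ᴴ * toeplitz n g) x).re) ∧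
    ‖quadForm (toeplitz n (fun t => (starRingEnd ℂ) (f t) * g t)
        - (toeplitz n f)ᴴ * toeplitz n g) x‖ ^ 2
      ≤ (quadForm (toeplitz n (fun t => f t * (starRingEnd ℂ) (f t))
          - (toeplitz n f)ᴴ * toeplitz n f) x).re *
        (quadForm (toeplitz n (fun t => g t * (starRingEnd ℂ) (g t))
          - (toeplitz n g)ᴴ * toeplitz n g) x).re :=
  uchiyama_inequality_toeplitz_general f g hf hg n x
end
end

section
/- Let {X_n} be a sequence of positive semidefinite Hermitian matrices (X_n of size n×n) converging to the zero sequence in Type 1 strong cluster sense, let γ > 0, and let {B_n} be a sequence of Hermitian n×n matrices such that |⟨B_n x, x⟩| ≤ γ^{1/2} · ⟨X_n x, x⟩^{1/2} for all unit vectors x ∈ ℂⁿ and all n. Then {B_n} converges to the zero sequence in Type 1 strong cluster sense; more precisely, if for ε = δ²/γ at most N₁ eigenvalues of X_n are ≥ ε for all large n, then at most 2N₁ eigenvalues of B_n lie outside [−δ, δ] for all large n. -/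
open MeasureTheory Matrix AddCircle
open scoped Real ComplexOrder

noncomputable section

/-! The eigenvectors of `Bₙ` with eigenvalue `> δ` span a subspace on whose unit vectors
`⟨Bₙ x, x⟩ > δ`, hence `⟨Xₙ x, x⟩ > δ² / γ` by the domination hypothesis. By the min-max
principle such a subspace has dimension at most the number `N` of eigenvalues of `Xₙ` that are
`≥ δ² / γ`: a larger one would meet the span of the remaining eigenvectors of `Xₙ`, on which
`⟨Xₙ x, x⟩ < δ² / γ`. The same holds for eigenvalues `< -δ`, so at most `2N` eigenvalues of `Bₙ`
lie outside `[-δ, δ]`. -/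

open scoped InnerProductSpace

namespace OrthonormalBasis

variable {ι 𝕜 E : Type*} [Fintype ι] [RCLike 𝕜] [NormedAddCommGroup E] [InnerProductSpace 𝕜 E]
  (b : OrthonormalBasis ι 𝕜 E) {s : Set ι} {x : E}

theorem finrank_span_image_s10 :
    Module.finrank 𝕜 (Submodule.span 𝕜 (b '' s)) = s.ncard := by
  classical
  rw [Set.image_eq_range, ← Nat.card_coe_set_eq, Nat.card_eq_fintype_card]
  exact finrank_span_eq_card (b.orthonormal.linearIndependent.comp _ Subtype.val_injective)

theorem inner_eq_zero_of_mem_span_image_s10 (hx : x ∈ Submodule.span 𝕜 (b '' s)) {i : ι}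
    (hi : i ∉ s) : ⟪b i, x⟫_𝕜 = 0 := by
  rw [← b.coe_toBasis, Module.Basis.mem_span_image] at hx
  rw [← b.repr_apply_apply, ← b.coe_toBasis_repr_apply]
  exact Finsupp.notMem_support_iff.mp fun h => hi (hx h)

theorem exists_mem_inner_ne_zero_of_mem_span_image (hx : x ∈ Submodule.span 𝕜 (b '' s))
    (hx0 : x ≠ 0) : ∃ i ∈ s, ⟪b i, x⟫_𝕜 ≠ 0 := by
  by_contra! h
  have hzero (i : ι) : ⟪b i, x⟫_𝕜 = 0 := by
    by_cases hi : i ∈ s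
    · exact h i hi
    · exact b.inner_eq_zero_of_mem_span_image_s10 hx hi
  apply hx0
  simpa [hzero] using (b.sum_sq_norm_inner_right x).symm

theorem sum_mul_norm_inner_sq_lt {f g : ι → ℝ} (hfg : ∀ i ∈ s, f i < g i)
    (hx : x ∈ Submodule.span 𝕜 (b '' s)) (hx0 : x ≠ 0) :
    ∑ i, f i * ‖⟪b i, x⟫_𝕜‖ ^ 2 < ∑ i, g i * ‖⟪b i, x⟫_𝕜‖ ^ 2 := by
  obtain ⟨i₀, hi₀s, hi₀⟩ := b.exists_mem_inner_ne_zero_of_mem_span_image hx hx0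
  refine Finset.sum_lt_sum (fun i _ => ?_) ⟨i₀, Finset.mem_univ _,
    mul_lt_mul_of_pos_right (hfg i₀ hi₀s) (by positivity)⟩
  by_cases hi : i ∈ s
  · exact mul_le_mul_of_nonneg_right (hfg i hi).le (by positivity)
  · simp [b.inner_eq_zero_of_mem_span_image_s10 hx hi]

end OrthonormalBasis

theorem quadForm_eq_inner {n : ℕ} (A : Matrix (Fin n) (Fin n) ℂ) (x : EuclideanSpace ℂ (Fin n)) :
    quadForm A x = ⟪x, toEuclideanLin A x⟫_ℂ := by
  simp only [quadForm, PiLp.inner_apply, toLpLin_apply, RCLike.inner_apply]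
  exact Finset.sum_congr rfl fun _ _ => mul_comm _ _

namespace Matrix.IsHermitian

variable {n : ℕ} {A : Matrix (Fin n) (Fin n) ℂ} (hA : A.IsHermitian)

theorem inner_eigenvectorBasis_toEuclideanLin (x : EuclideanSpace ℂ (Fin n)) (i : Fin n) :
    ⟪hA.eigenvectorBasis i, toEuclideanLin A x⟫_ℂ
      = hA.eigenvalues i * ⟪hA.eigenvectorBasis i, x⟫_ℂ := by
  have heigen : toEuclideanLin A (hA.eigenvectorBasis i)
      = (hA.eigenvalues i : ℂ) • hA.eigenvectorBasis i := by
    ext j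
    simpa [toLpLin_apply] using congrFun (hA.mulVec_eigenvectorBasis i) j
  rw [← isSymmetric_toEuclideanLin_iff.mpr hA, heigen, inner_smul_left, Complex.conj_ofReal]

theorem re_quadForm_eq_sum (x : EuclideanSpace ℂ (Fin n)) :
    (quadForm A x).re = ∑ i, hA.eigenvalues i * ‖⟪hA.eigenvectorBasis i, x⟫_ℂ‖ ^ 2 := by
  have hsum : quadForm A x
      = ∑ i, ((hA.eigenvalues i * ‖⟪hA.eigenvectorBasis i, x⟫_ℂ‖ ^ 2 : ℝ) : ℂ) := by
    rw [quadForm_eq_inner, ← hA.eigenvectorBasis.sum_inner_mul_inner]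
    refine Finset.sum_congr rfl fun i _ => ?_
    rw [hA.inner_eigenvectorBasis_toEuclideanLin, ← inner_conj_symm, mul_left_comm,
      RCLike.conj_mul]
    push_cast
    rfl
  rw [hsum, ← Complex.ofReal_sum, Complex.ofReal_re]

variable {s : Set (Fin n)} {a : ℝ} {x : EuclideanSpace ℂ (Fin n)}

theorem lt_re_quadForm_of_mem_span (hs : ∀ i ∈ s, a < hA.eigenvalues i)
    (hx : x ∈ Submodule.span ℂ (hA.eigenvectorBasis '' s)) (hx0 : x ≠ 0) :
    a * ‖x‖ ^ 2 < (quadForm A x).re := by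
  rw [hA.re_quadForm_eq_sum, ← hA.eigenvectorBasis.sum_sq_norm_inner_right, Finset.mul_sum]
  exact hA.eigenvectorBasis.sum_mul_norm_inner_sq_lt hs hx hx0

theorem re_quadForm_lt_of_mem_span (hs : ∀ i ∈ s, hA.eigenvalues i < a)
    (hx : x ∈ Submodule.span ℂ (hA.eigenvectorBasis '' s)) (hx0 : x ≠ 0) :
    (quadForm A x).re < a * ‖x‖ ^ 2 := by
  rw [hA.re_quadForm_eq_sum, ← hA.eigenvectorBasis.sum_sq_norm_inner_right, Finset.mul_sum]
  exact hA.eigenvectorBasis.sum_mul_norm_inner_sq_lt hs hx hx0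

theorem finrank_le_ncard_le_eigenvalues {V : Submodule ℂ (EuclideanSpace ℂ (Fin n))} {c : ℝ}
    (hV : ∀ x ∈ V, ‖x‖ = 1 → c ≤ (quadForm A x).re) :
    Module.finrank ℂ V ≤ {i | c ≤ hA.eigenvalues i}.ncard := by
  by_contra! hlt
  let W := Submodule.span ℂ (hA.eigenvectorBasis '' {i | hA.eigenvalues i < c})
  have hW : Module.finrank ℂ W = n - {i | c ≤ hA.eigenvalues i}.ncard := by
    have hcompl : {i | hA.eigenvalues i < c} = {i | c ≤ hA.eigenvalues i}ᶜ := by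
      ext i; simp
    rw [hA.eigenvectorBasis.finrank_span_image_s10, hcompl, Set.ncard_compl, Nat.card_fin]
  have hnot : ¬ Disjoint V W := fun h => by
    have := Submodule.finrank_add_finrank_le_of_disjoint h
    have := Submodule.finrank_le V
    rw [finrank_euclideanSpace_fin] at *
    omega
  obtain ⟨x, hxV, hxW, hx0⟩ : ∃ x ∈ V, x ∈ W ∧ x ≠ 0 := by
    simpa [Submodule.disjoint_def] using hnot
  have hy := norm_smul_inv_norm (𝕜 := ℂ) hx0
  have hlt := hA.re_quadForm_lt_of_mem_span (fun i hi => hi) (W.smul_mem _ hxW)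
    (norm_ne_zero_iff.mp (hy.symm ▸ one_ne_zero))
  rw [hy] at hlt
  linarith [hV _ (V.smul_mem _ hxV) hy]

end Matrix.IsHermitian

theorem sq_div_lt_of_lt_sqrt_mul_sqrt {γ δ t : ℝ} (hγ : 0 < γ) (hδ : 0 ≤ δ)
    (h : δ < Real.sqrt γ * Real.sqrt t) : δ ^ 2 / γ < t := by
  have ht : 0 < t := by
    by_contra! ht
    rw [Real.sqrt_eq_zero'.mpr ht, mul_zero] at h
    linarith
  rw [div_lt_iff₀ hγ]
  calc δ ^ 2 < (Real.sqrt γ * Real.sqrt t) ^ 2 := pow_lt_pow_left₀ h hδ two_ne_zero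
    _ = t * γ := by rw [mul_pow, Real.sq_sqrt hγ.le, Real.sq_sqrt ht.le, mul_comm]

theorem ncard_lt_abs_eigenvalues_le_two_mul {n : ℕ} {B X : Matrix (Fin n) (Fin n) ℂ}
    (hB : B.IsHermitian) (hX : X.IsHermitian) {γ δ : ℝ} (hγ : 0 < γ) (hδ : 0 ≤ δ)
    (hdom : ∀ x : Fin n → ℂ, (∑ i, ‖x i‖ ^ 2) = 1 →
      ‖quadForm B x‖ ≤ Real.sqrt γ * Real.sqrt (quadForm X x).re) :
    {i | δ < |hB.eigenvalues i|}.ncard ≤ 2 * {i | δ ^ 2 / γ ≤ hX.eigenvalues i}.ncard := by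
  have hX_large (x : EuclideanSpace ℂ (Fin n)) (hx : ‖x‖ = 1)
      (hBx : δ < |(quadForm B x).re|) : δ ^ 2 / γ ≤ (quadForm X x).re := by
    have hunit : ∑ i, ‖x i‖ ^ 2 = 1 := by rw [← EuclideanSpace.norm_sq_eq, hx, one_pow]
    exact (sq_div_lt_of_lt_sqrt_mul_sqrt hγ hδ
      (hBx.trans_le ((Complex.abs_re_le_norm _).trans (hdom x hunit)))).le
  have hcard (s : Set (Fin n))
      (hs : ∀ x ∈ Submodule.span ℂ (hB.eigenvectorBasis '' s), ‖x‖ = 1 →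
        δ < |(quadForm B x).re|) :
      s.ncard ≤ {i | δ ^ 2 / γ ≤ hX.eigenvalues i}.ncard := by
    rw [← hB.eigenvectorBasis.finrank_span_image_s10]
    exact hX.finrank_le_ncard_le_eigenvalues fun x hxV hx => hX_large x hx (hs x hxV hx)
  have hpos := hcard {i | δ < hB.eigenvalues i} fun x hxV hx => by
    have hlt := hB.lt_re_quadForm_of_mem_span (fun i hi => hi) hxV
      (norm_ne_zero_iff.mp (by simp [hx]))
    rw [hx, one_pow, mul_one] at hlt
    exact hlt.trans_le (le_abs_self _)
  have hneg := hcard {i | hB.eigenvalues i < -δ} fun x hxV hx => by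
    have hlt := hB.re_quadForm_lt_of_mem_span (fun i hi => hi) hxV
      (norm_ne_zero_iff.mp (by simp [hx]))
    rw [hx, one_pow, mul_one] at hlt
    exact lt_abs.mpr (Or.inr (lt_neg.mpr hlt))
  calc {i | δ < |hB.eigenvalues i|}.ncard
      ≤ ({i | δ < hB.eigenvalues i} ∪ {i | hB.eigenvalues i < -δ}).ncard :=
        Set.ncard_le_ncard fun i (hi : δ < |_|) => (lt_abs.mp hi).imp id lt_neg.mp
    _ ≤ {i | δ < hB.eigenvalues i}.ncard + {i | hB.eigenvalues i < -δ}.ncard :=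
        Set.ncard_union_le _ _
    _ ≤ 2 * {i | δ ^ 2 / γ ≤ hX.eigenvalues i}.ncard := by omega

/-- the eigenvalue counting argument in the proof of Theorem 1.3:
if `{Xₙ}` is a sequence of positive semidefinite matrices converging to the zero
sequence in Type 1 strong cluster sense, `γ > 0`, and `{Bₙ}` is a sequence of
Hermitian matrices with `|⟨Bₙ x, x⟩| ≤ √γ · ⟨Xₙ x, x⟩^{1/2}` for all (Euclidean) unit
vectors `x`, then `{Bₙ}` converges to the zero sequence in Type 1 strong cluster
sense; more precisely, for `δ > 0`, if at most `N₁` eigenvalues of `Xₙ` are `≥ δ²/γ`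
for all `n > N₂`, then at most `2·N₁` eigenvalues of `Bₙ` lie outside `[−δ, δ]` for
all `n > N₂`. -/
theorem type1StrongCluster_of_dominated
    (X B : ∀ n : ℕ, Matrix (Fin n) (Fin n) ℂ)
    (hX : ∀ n, (X n).PosSemidef) (hB : ∀ n, (B n).IsHermitian)
    (γ : ℝ) (hγ : 0 < γ)
    (hXcluster : Type1StrongCluster X (fun n => (hX n).isHermitian))
    (hdom : ∀ n : ℕ, ∀ x : Fin n → ℂ, (∑ i, ‖x i‖ ^ 2) = 1 →
      ‖quadForm (B n) x‖ ≤ Real.sqrt γ * Real.sqrt (quadForm (X n) x).re) :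
    Type1StrongCluster B hB ∧
      ∀ δ > (0 : ℝ), ∀ N₁ N₂ : ℕ,
        (∀ n : ℕ, N₂ < n →
          {i : Fin n | δ ^ 2 / γ ≤ (hX n).isHermitian.eigenvalues i}.ncard ≤ N₁) →
        ∀ n : ℕ, N₂ < n →
          {i : Fin n | δ < |(hB n).eigenvalues i|}.ncard ≤ 2 * N₁ := by
  have hcount : ∀ δ > (0 : ℝ), ∀ N₁ N₂ : ℕ,
      (∀ n : ℕ, N₂ < n →
        {i : Fin n | δ ^ 2 / γ ≤ (hX n).isHermitian.eigenvalues i}.ncard ≤ N₁) →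
      ∀ n : ℕ, N₂ < n → {i : Fin n | δ < |(hB n).eigenvalues i|}.ncard ≤ 2 * N₁ :=
    fun δ hδ N₁ N₂ hN n hn =>
      (ncard_lt_abs_eigenvalues_le_two_mul (hB n) (hX n).isHermitian hγ hδ.le (hdom n)).trans
        (Nat.mul_le_mul_left 2 (hN n hn))
  refine ⟨fun ε hε => ?_, hcount⟩
  obtain ⟨N₁, N₂, hN⟩ := hXcluster ((ε / 2) ^ 2 / γ) (by positivity)
  refine ⟨2 * N₁, N₂, fun n hn => ?_⟩
  have hXabs (m : ℕ) (c : ℝ) : {i : Fin m | c ≤ |(hX m).isHermitian.eigenvalues i|}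
      = {i | c ≤ (hX m).isHermitian.eigenvalues i} := by
    simp_rw [abs_of_nonneg ((hX m).eigenvalues_nonneg _)]
  calc {i | ε ≤ |(hB n).eigenvalues i|}.ncard
      ≤ {i | ε / 2 < |(hB n).eigenvalues i|}.ncard :=
        Set.ncard_le_ncard fun i (hi : ε ≤ _) => (half_lt_self hε).trans_le hi
    _ ≤ 2 * N₁ := hcount (ε / 2) (half_pos hε) N₁ N₂ (fun m hm => hXabs m _ ▸ hN m hm) n hn
end
end

section
/- Let {A_n} be a sequence of Hermitian matrices, A_n of size n×n. Then {A_n} converges to the zero sequence in Type 1 strong cluster sense if and only if {A_n} converges to the zero sequence in Type 2 strong cluster sense. -/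
open MeasureTheory Matrix AddCircle
open scoped Real ComplexOrder

noncomputable section

/-! Splitting a Hermitian `A` along its eigenvectors into the part carried by the eigenvalues with
`ε ≤ |λ|` and the rest gives `A = R + E` with `rank R` at most the number of those eigenvalues
and `‖E‖ ≤ ε`; running this at `ε / 2` gives Type 2 from Type 1. Conversely, if `A = R + E` with
`‖E‖ < ε` and more than `rank R` eigenvalues satisfy `ε ≤ |λ|`, then the span of their
eigenvectors meets `ker R` in some `y ≠ 0`, and `ε ‖y‖ ≤ ‖A y‖ = ‖E y‖ < ε ‖y‖`. -/

theorem LinearMap.exists_mem_ne_zero_apply_eq_zero_of_finrank_range_lt {K V V₂ : Type*}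
    [DivisionRing K] [AddCommGroup V] [Module K V] [FiniteDimensional K V] [AddCommGroup V₂]
    [Module K V₂]
    (f : V →ₗ[K] V₂) {W : Submodule K V}
    (hW : Module.finrank K (LinearMap.range f) < Module.finrank K W) :
    ∃ y ∈ W, y ≠ 0 ∧ f y = 0 := by
  have hrange : Module.finrank K (LinearMap.range (f.domRestrict W)) ≤
      Module.finrank K (LinearMap.range f) :=
    Submodule.finrank_mono (LinearMap.range_domRestrict_le_range f W)
  have hker : LinearMap.ker (f.domRestrict W) ≠ ⊥ := by
    intro h
    have := (f.domRestrict W).finrank_range_add_finrank_ker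
    rw [h, finrank_bot] at this
    omega
  obtain ⟨y, hy, hy0⟩ := Submodule.exists_mem_ne_zero_of_ne_bot hker
  exact ⟨y, y.2, by simpa using hy0, hy⟩

namespace OrthonormalBasis

variable {𝕜 E ι : Type*} [RCLike 𝕜] [NormedAddCommGroup E] [InnerProductSpace 𝕜 E] [Fintype ι]
  (b : OrthonormalBasis ι 𝕜 E) {T : E →ₗ[𝕜] E} {μ : ι → 𝕜}

theorem repr_apply_of_apply_eq_smul (hT : ∀ i, T (b i) = μ i • b i) (y : E) (i : ι) :
    b.repr (T y) i = μ i * b.repr y i := by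
  classical
  conv_lhs => rw [← b.sum_repr y]
  simp [map_sum, hT, smul_smul, b.repr_self, Pi.single_apply, mul_comm]

theorem norm_sq_apply_of_apply_eq_smul (hT : ∀ i, T (b i) = μ i • b i) (y : E) :
    ‖T y‖ ^ 2 = ∑ i, ‖μ i‖ ^ 2 * ‖b.repr y i‖ ^ 2 := by
  simp only [← b.repr.norm_map, EuclideanSpace.norm_sq_eq, b.repr_apply_of_apply_eq_smul hT,
    norm_mul, mul_pow]

theorem mul_norm_le_norm_apply_of_apply_eq_smul (hT : ∀ i, T (b i) = μ i • b i)
    {c : ℝ} (hc : 0 ≤ c) {y : E} (hy : ∀ i, b.repr y i ≠ 0 → c ≤ ‖μ i‖) :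
    c * ‖y‖ ≤ ‖T y‖ := by
  refine le_of_sq_le_sq ?_ (norm_nonneg _)
  rw [b.norm_sq_apply_of_apply_eq_smul hT, mul_pow, ← b.repr.norm_map, EuclideanSpace.norm_sq_eq,
    Finset.mul_sum]
  refine Finset.sum_le_sum fun i _ => ?_
  by_cases h : b.repr y i = 0
  · simp [h]
  · gcongr
    exact hy i h

theorem repr_apply_eq_zero_of_mem_span_image {s : Set ι} {y : E}
    (hy : y ∈ Submodule.span 𝕜 (b '' s)) {i : ι} (hi : i ∉ s) : b.repr y i = 0 := by
  classical
  induction hy using Submodule.span_induction with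
  | mem x hx =>
    obtain ⟨j, hj, rfl⟩ := hx
    simp [b.repr_self, ne_of_mem_of_not_mem hj hi |>.symm]
  | zero => simp
  | add x y _ _ hx hy => simp [hx, hy]
  | smul a x _ hx => simp [hx]

end OrthonormalBasis

namespace Matrix

theorem finrank_range_toEuclideanLin_s11 {𝕜 m n : Type*} [RCLike 𝕜] [Finite m] [Fintype n]
    [DecidableEq n] (A : Matrix m n 𝕜) :
    Module.finrank 𝕜 (LinearMap.range (toEuclideanLin A)) = A.rank := by
  rw [A.rank_eq_finrank_range_toLin (PiLp.basisFun 2 𝕜 m) (PiLp.basisFun 2 𝕜 n)]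
  rfl

namespace IsHermitian

variable {𝕜 n : Type*} [RCLike 𝕜] [Fintype n] [DecidableEq n] {A : Matrix n n 𝕜}
  (hA : A.IsHermitian)

theorem toEuclideanLin_eigenvectorBasis (j : n) :
    toEuclideanLin A (hA.eigenvectorBasis j) =
      (hA.eigenvalues j : 𝕜) • hA.eigenvectorBasis j := by
  ext1
  rw [ofLp_toLpLin, toLin'_apply, hA.mulVec_eigenvectorBasis, WithLp.ofLp_smul,
    RCLike.real_smul_eq_coe_smul (K := 𝕜)]

theorem cfc_add (f g : ℝ → ℝ) : hA.cfc f + hA.cfc g = hA.cfc (f + g) := by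
  rw [IsHermitian.cfc, IsHermitian.cfc, IsHermitian.cfc, ← map_add, diagonal_add]
  congr 2
  ext i
  simp

theorem cfc_id : hA.cfc id = A := hA.spectral_theorem.symm

theorem rank_cfc (f : ℝ → ℝ) :
    (hA.cfc f).rank = Fintype.card {i // f (hA.eigenvalues i) ≠ 0} := by
  rw [IsHermitian.cfc, Unitary.conjStarAlgAut_apply, ← Unitary.coe_star,
    rank_mul_eq_left_of_isUnit_det _ _ (UnitaryGroup.det_isUnit _),
    rank_mul_eq_right_of_isUnit_det _ _ (UnitaryGroup.det_isUnit _), rank_diagonal]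
  simp

open scoped Matrix.Norms.L2Operator in
theorem norm_toEuclideanCLM_cfc_le {f : ℝ → ℝ} {c : ℝ} (hc : 0 ≤ c)
    (hf : ∀ i, |f (hA.eigenvalues i)| ≤ c) :
    ‖toEuclideanCLM (𝕜 := 𝕜) (hA.cfc f)‖ ≤ c := by
  rw [← cstar_norm_def, IsHermitian.cfc, Unitary.conjStarAlgAut_apply, ← Unitary.coe_star,
    CStarRing.norm_mul_coe_unitary, CStarRing.norm_coe_unitary_mul, l2_opNorm_diagonal,
    pi_norm_le_iff_of_nonneg hc]
  simpa using hf

theorem exists_eq_add_rank_le_ncard_norm_le {ε : ℝ} (hε : 0 ≤ ε) :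
    ∃ R E : Matrix n n 𝕜, A = R + E ∧ R.rank ≤ {i | ε ≤ |hA.eigenvalues i|}.ncard ∧
      ‖toEuclideanCLM (𝕜 := 𝕜) E‖ ≤ ε := by
  refine ⟨hA.cfc fun x => if ε ≤ |x| then x else 0, hA.cfc fun x => if ε ≤ |x| then 0 else x,
    ?_, ?_, ?_⟩
  · conv_lhs => rw [← hA.cfc_id]
    rw [hA.cfc_add]
    congr 1
    ext x
    simp only [id, Pi.add_apply]
    split_ifs <;> simp
  · rw [hA.rank_cfc, ← Nat.card_eq_fintype_card, ← Nat.card_coe_set_eq]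
    refine Nat.card_mono (Set.toFinite _) fun i hi => ?_
    by_contra h
    exact hi (if_neg h)
  · refine hA.norm_toEuclideanCLM_cfc_le hε fun i => ?_
    split_ifs with h
    · simpa using hε
    · exact (not_le.1 h).le

theorem ncard_le_rank_of_eq_add_of_norm_lt {R E : Matrix n n 𝕜} {ε : ℝ} (hRE : A = R + E)
    (hE : ‖toEuclideanCLM (𝕜 := 𝕜) E‖ < ε) :
    {i | ε ≤ |hA.eigenvalues i|}.ncard ≤ R.rank := by
  classical
  set b := hA.eigenvectorBasis
  set S := {i | ε ≤ |hA.eigenvalues i|}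
  have hε : 0 ≤ ε := (norm_nonneg _).trans hE.le
  by_contra! hlt
  have hW : Module.finrank 𝕜 (Submodule.span 𝕜 (b '' S)) = S.ncard := by
    rw [Set.image_eq_range, ← Nat.card_coe_set_eq, Nat.card_eq_fintype_card]
    exact finrank_span_eq_card (b.orthonormal.linearIndependent.comp _ Subtype.val_injective)
  obtain ⟨y, hyW, hy0, hRy⟩ := LinearMap.exists_mem_ne_zero_apply_eq_zero_of_finrank_range_lt
    (toEuclideanLin R) (W := Submodule.span 𝕜 (b '' S))
    (by rwa [finrank_range_toEuclideanLin_s11, hW])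
  have hlow : ε * ‖y‖ ≤ ‖toEuclideanLin A y‖ := by
    refine b.mul_norm_le_norm_apply_of_apply_eq_smul hA.toEuclideanLin_eigenvectorBasis hε
      fun i hi => ?_
    rw [RCLike.norm_ofReal]
    by_contra h
    exact hi (b.repr_apply_eq_zero_of_mem_span_image hyW h)
  have hAy : toEuclideanLin A y = toEuclideanCLM (𝕜 := 𝕜) E y := by
    rw [hRE, map_add, LinearMap.add_apply, hRy, zero_add]
    rfl
  have hup : ‖toEuclideanCLM (𝕜 := 𝕜) E y‖ < ε * ‖y‖ :=
    ((toEuclideanCLM (𝕜 := 𝕜) E).le_opNorm y).trans_lt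
      (mul_lt_mul_of_pos_right hE (norm_pos_iff.2 hy0))
  rw [hAy] at hlow
  exact hup.not_ge hlow

end IsHermitian

end Matrix

/-- Remark 1.4 of the paper: for a sequence of Hermitian matrices,
convergence to the zero sequence in Type 1 strong cluster sense and in Type 2 strong
cluster sense are equivalent. -/
theorem type1StrongCluster_iff_type2StrongCluster
    (A : ∀ n : ℕ, Matrix (Fin n) (Fin n) ℂ) (hA : ∀ n, (A n).IsHermitian) :
    Type1StrongCluster A hA ↔ Type2StrongCluster A := by
  constructor
  · intro h1 ε hε
    obtain ⟨N₁, N₂, h⟩ := h1 (ε / 2) (by positivity)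
    refine ⟨N₁, N₂, fun n hn => ?_⟩
    obtain ⟨R, E, hRE, hR, hE⟩ :=
      (hA n).exists_eq_add_rank_le_ncard_norm_le (ε := ε / 2) (by positivity)
    exact ⟨R, E, hRE, hR.trans (h n hn), hE.trans_lt (half_lt_self hε)⟩
  · intro h2 ε hε
    obtain ⟨N₁, N₂, h⟩ := h2 ε hε
    refine ⟨N₁, N₂, fun n hn => ?_⟩
    obtain ⟨R, E, hRE, hR, hE⟩ := h n hn
    exact ((hA n).ncard_le_rank_of_eq_add_of_norm_lt hRE hE).trans hR
end
end
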